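/- arXiv:1805.10285 — 7 statements merged into one kernel-verified Lean document; each statement's English description precedes it below -/
import Mathlib

section
/- For a finite-dimensional evolution algebra E with structure matrix A = (a_{ij}) in a natural basis, the dimension of E² (the span of all products u·v) equals the rank of A; in particular rank A does not depend on the choice of natural basis. -/
/-!
In a natural basis the product is diagonal, `x * y = ∑ i, xᵢ yᵢ • eᵢ²`, so `E²` is spanned by the
squares `eᵢ² = ∑ k, aᵢₖ • eₖ`. The coordinate isomorphism `E ≃ Kⁿ` sends these to the rows of `A`,
so `dim E²` is the dimension of the row space of `A`, i.e. its rank.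
-/

open Module

namespace Module.Basis

variable {ι K E : Type*} [Fintype ι] [CommSemiring K] [NonUnitalNonAssocSemiring E]
  [Module K E] [SMulCommClass K E E] [IsScalarTower K E E]

theorem mul_eq_sum_smul_mul_self (e : Basis ι K E) (he : Pairwise fun i j => e i * e j = 0)
    (x y : E) : x * y = ∑ i, (e.repr x i * e.repr y i) • (e i * e i) := by
  classical
  conv_lhs => rw [← e.sum_repr x, ← e.sum_repr y]
  simp only [Finset.sum_mul, Finset.mul_sum, smul_mul_smul_comm]
  refine Finset.sum_congr rfl fun i _ => Finset.sum_eq_single i (fun j _ hji => ?_) (by simp)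
  rw [he hji, smul_zero]

theorem span_mul_eq_span_range_mul_self (e : Basis ι K E) (he : Pairwise fun i j => e i * e j = 0) :
    Submodule.span K {z : E | ∃ x y : E, x * y = z} =
      Submodule.span K (Set.range fun i => e i * e i) := by
  apply le_antisymm <;> rw [Submodule.span_le]
  · rintro _ ⟨x, y, rfl⟩
    rw [e.mul_eq_sum_smul_mul_self he]
    exact Submodule.sum_mem _ fun i _ => Submodule.smul_mem _ _ (Submodule.subset_span ⟨i, rfl⟩)
  · rintro _ ⟨i, rfl⟩
    exact Submodule.subset_span ⟨e i, e i, rfl⟩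

end Module.Basis

theorem Matrix.finrank_span_range_sum_smul_basis_eq_rank {m n K E : Type*} [Fintype m]
    [Fintype n] [Field K] [AddCommGroup E] [Module K E] (A : Matrix m n K) (e : Basis n K E) :
    finrank K (Submodule.span K (Set.range fun i => ∑ k, A i k • e k)) = A.rank := by
  have hrow : (fun i => ∑ k, A i k • e k) = e.equivFun.symm ∘ A.row := by
    funext i
    exact (e.equivFun_symm_apply (A.row i)).symm
  rw [hrow, Set.range_comp, Submodule.span_image_linearEquiv, LinearEquiv.finrank_map_eq,
    Matrix.rank_eq_finrank_span_row]

theorem stmt1_general {K E : Type*} [Field K] [NonUnitalNonAssocRing E]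
    [Module K E] [SMulCommClass K E E] [IsScalarTower K E E]
    (n : ℕ) (e : Module.Basis (Fin n) K E) (A : Matrix (Fin n) (Fin n) K)
    (hzero : ∀ i j : Fin n, i ≠ j → e i * e j = 0)
    (hsq : ∀ i : Fin n, e i * e i = ∑ k, A i k • e k) :
    Module.finrank K ↥(Submodule.span K {z : E | ∃ x y : E, x * y = z}) = A.rank := by
  rw [e.span_mul_eq_span_range_mul_self fun i j => hzero i j, funext hsq]
  exact A.finrank_span_range_sum_smul_basis_eq_rank e

/-- For a finite-dimensional evolution algebra `E` with structure matrix
`A = (a_{ij})` in a natural basis, `dim E²` equals `rank A`; in particular `rank A`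
does not depend on the choice of natural basis. -/
theorem stmt1 {K E : Type*} [Field K] [CharZero K] [NonUnitalNonAssocRing E]
    [Module K E] [SMulCommClass K E E] [IsScalarTower K E E]
    (n : ℕ) (e : Module.Basis (Fin n) K E) (A : Matrix (Fin n) (Fin n) K)
    (hzero : ∀ i j : Fin n, i ≠ j → e i * e j = 0)
    (hsq : ∀ i : Fin n, e i * e i = ∑ k, A i k • e k) :
    Module.finrank K ↥(Submodule.span K {z : E | ∃ x y : E, x * y = z}) = A.rank :=
  stmt1_general n e A hzero hsq
end

section
/- Let E be the n-dimensional evolution algebra with e_i² = a_{i,i+1} e_{i+1} + a_{in} e_n for i < n−1, e_{n−1}² = a_{n−1,n} e_n, e_n² = 0, where a_{i,i+1} ≠ 0 for all i < n. Let E' be the evolution algebra with f_i² = f_{i+1} for i < n and f_n² = 0. Then E and E' are isomorphic as algebras. -/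
/-!
Since `e_{n-1}` annihilates `E`, squaring `c • e_k + d • e_{n-1}` gives `c² • e_k²`, which
lies in `span {e_{k+1}, e_{n-1}}` with nonzero `e_{k+1}`-coordinate. Hence the iterated squares
`g_0 = e_0, g_{k+1} = g_k²` are triangular with respect to `e`, so they form a basis of `E`,
and by construction they multiply exactly like the `f_k`.
-/

open Module Submodule

section General

variable {R M ι : Type*} [CommRing R] [AddCommGroup M] [Module R M]

theorem Module.Basis.exists_basis_of_triangular_repr [Fintype ι] [LinearOrder ι]
    (e : Basis ι R M) (v : ι → M)
    (hlt : ∀ i j, j < i → e.repr (v i) j = 0) (hdiag : ∀ i, IsUnit (e.repr (v i) i)) :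
    ∃ b : Basis ι R M, ⇑b = v := by
  have hdet : IsUnit (e.det v) := by
    rw [e.det_apply, Matrix.det_of_isLowerTriangular (e.toMatrix v) fun i j hij => hlt j i hij]
    exact IsUnit.prod_univ_iff.2 hdiag
  obtain ⟨hli, hspan⟩ := e.is_basis_iff_det.2 hdet
  exact ⟨Basis.mk hli hspan.ge, Basis.coe_mk _ _⟩

theorem LinearMap.map_mul_of_basis {A B : Type*}
    [NonUnitalNonAssocRing A] [Module R A] [SMulCommClass R A A] [IsScalarTower R A A]
    [NonUnitalNonAssocRing B] [Module R B] [SMulCommClass R B B] [IsScalarTower R B B]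
    (b : Basis ι R A) (φ : A →ₗ[R] B) (h : ∀ i j, φ (b i * b j) = φ (b i) * φ (b j))
    (x y : A) : φ (x * y) = φ x * φ y :=
  LinearMap.congr_fun₂
    (LinearMap.ext_basis b b (B := (LinearMap.mul R A).compr₂ φ)
      (B' := (LinearMap.mul R B).compl₁₂ φ φ) h) x y

theorem Module.Basis.repr_eq_zero_of_mem_span_pair {e : Basis ι R M} {k m j : ι} {x : M}
    (hx : x ∈ span R {e k, e m}) (hjk : j ≠ k) (hjm : j ≠ m) : e.repr x j = 0 := by
  obtain ⟨c, d, rfl⟩ := mem_span_pair.1 hx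
  simp [hjk.symm, hjm.symm]

end General

section Evolution

variable {K A B : Type*} [Field K]
  [NonUnitalNonAssocRing A] [Module K A] [SMulCommClass K A A] [IsScalarTower K A A]
  [NonUnitalNonAssocRing B] [Module K B] [SMulCommClass K B B] [IsScalarTower K B B]

structure IsNilChain {n : ℕ} (b : Fin n → A) : Prop where
  pairwise_mul : Pairwise fun i j => b i * b j = 0
  mul_self_of_lt : ∀ i : Fin n, ∀ hi : (i : ℕ) + 1 < n, b i * b i = b ⟨i + 1, hi⟩
  mul_self_of_eq : ∀ i : Fin n, (i : ℕ) + 1 = n → b i * b i = 0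

theorem IsNilChain.exists_mulEquiv {n : ℕ} {b : Basis (Fin n) K A} {b' : Basis (Fin n) K B}
    (hb : IsNilChain ⇑b) (hb' : IsNilChain ⇑b') :
    ∃ ψ : A ≃ₗ[K] B, ∀ x y, ψ (x * y) = ψ x * ψ y := by
  let ψ := b.equiv b' (Equiv.refl _)
  refine ⟨ψ, LinearMap.map_mul_of_basis b ψ.toLinearMap fun i j => ?_⟩
  simp only [LinearEquiv.coe_coe, ψ, Basis.equiv_apply, Equiv.refl_apply]
  rcases eq_or_ne i j with rfl | hij
  · by_cases hi : (i : ℕ) + 1 < n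
    · rw [hb.mul_self_of_lt i hi, hb'.mul_self_of_lt i hi, Basis.equiv_apply, Equiv.refl_apply]
    · have hlast : (i : ℕ) + 1 = n := by omega
      rw [hb.mul_self_of_eq i hlast, hb'.mul_self_of_eq i hlast, map_zero]
  · rw [hb.pairwise_mul hij, hb'.pairwise_mul hij, map_zero]

namespace Module.Basis

variable {ι : Type*} (e : Basis ι K A) {m : ι}

theorem mul_eq_zero_of_mul_self_eq_zero (he : Pairwise fun i j => e i * e j = 0)
    (hm : e m * e m = 0) (x : A) : e m * x = 0 ∧ x * e m = 0 := by
  have hl : LinearMap.mul K A (e m) = 0 := e.ext fun j => by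
    rcases eq_or_ne m j with rfl | hmj
    · exact hm
    · exact he hmj
  have hr : (LinearMap.mul K A).flip (e m) = 0 := e.ext fun j => by
    rcases eq_or_ne j m with rfl | hjm
    · exact hm
    · exact he hjm
  exact ⟨LinearMap.congr_fun hl x, LinearMap.congr_fun hr x⟩

variable {e}

theorem mul_eq_zero_of_mem_span_pair (he : Pairwise fun i j => e i * e j = 0)
    (hm : e m * e m = 0) {i j : ι} (hij : i ≠ j) {x y : A}
    (hx : x ∈ span K {e i, e m}) (hy : y ∈ span K {e j, e m}) : x * y = 0 := by
  obtain ⟨c, d, rfl⟩ := mem_span_pair.1 hx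
  obtain ⟨c', d', rfl⟩ := mem_span_pair.1 hy
  have hann := e.mul_eq_zero_of_mul_self_eq_zero he hm
  simp [add_mul, mul_add, smul_mul_assoc, mul_smul_comm, he hij, (hann _).1, (hann _).2]

theorem mul_self_eq_of_mem_span_pair (he : Pairwise fun i j => e i * e j = 0)
    (hm : e m * e m = 0) {k : ι} {x : A} (hx : x ∈ span K {e k, e m}) :
    x * x = e.repr x k ^ 2 • (e k * e k) := by
  obtain ⟨c, d, rfl⟩ := mem_span_pair.1 hx
  have hann := e.mul_eq_zero_of_mul_self_eq_zero he hm
  rcases eq_or_ne k m with rfl | hkm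
  · simp [add_mul, mul_add, smul_mul_assoc, mul_smul_comm, hm]
  · simp [add_mul, mul_add, smul_mul_assoc, mul_smul_comm, (hann _).1, (hann _).2,
      hkm.symm, smul_smul, sq]

theorem exists_isNilChain_of_mul_self_mem_span_pair {n : ℕ} (e : Basis (Fin n) K A)
    (he : Pairwise fun i j => e i * e j = 0) {m : Fin n} (hm_last : (m : ℕ) + 1 = n)
    (hm : e m * e m = 0)
    (hsq : ∀ i : Fin n, ∀ hi : (i : ℕ) + 1 < n,
      e i * e i ∈ span K {e ⟨i + 1, hi⟩, e m} ∧ e.repr (e i * e i) ⟨i + 1, hi⟩ ≠ 0) :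
    ∃ b : Basis (Fin n) K A, IsNilChain ⇑b := by
  let v : Fin n → A := fun i => (fun x => x * x)^[i] (e ⟨0, by omega⟩)
  have hv : ∀ i, v i ∈ span K {e i, e m} ∧ e.repr (v i) i ≠ 0 := by
    rintro ⟨k, hk⟩
    induction k with
    | zero => exact ⟨subset_span (Set.mem_insert _ _), by simp [v]⟩
    | succ k ih =>
      obtain ⟨hmem, hne⟩ := ih (by omega)
      obtain ⟨hsq_mem, hsq_ne⟩ := hsq ⟨k, by omega⟩ hk
      simp only [v, Function.iterate_succ_apply'] at hmem hne ⊢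
      rw [mul_self_eq_of_mem_span_pair he hm hmem]
      exact ⟨smul_mem _ _ hsq_mem, by simpa using mul_ne_zero (pow_ne_zero 2 hne) hsq_ne⟩
  have hm_top : ∀ i : Fin n, i ≤ m := fun i => Fin.le_def.2 (by omega)
  obtain ⟨b, hb⟩ := e.exists_basis_of_triangular_repr v
    (fun i j hji => repr_eq_zero_of_mem_span_pair (hv i).1 hji.ne ((hji.trans_le (hm_top i)).ne))
    (fun i => (hv i).2.isUnit)
  refine ⟨b, hb ▸ ⟨fun i j hij => mul_eq_zero_of_mem_span_pair he hm hij (hv i).1 (hv j).1,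
    fun i _ => (Function.iterate_succ_apply' (fun x => x * x) i _).symm, fun i hi => ?_⟩⟩
  obtain rfl : i = m := Fin.ext (by omega)
  rw [mul_self_eq_of_mem_span_pair he hm (hv i).1, hm, smul_zero]

end Module.Basis

end Evolution

/-- The evolution algebra with `e_i² = a_{i,i+1} e_{i+1} + a_{in} e_n`
(for `i < n−1`), `e_{n−1}² = a_{n−1,n} e_n`, `e_n² = 0`, with `a_{i,i+1} ≠ 0`,
is isomorphic to the evolution algebra with `f_i² = f_{i+1}` (for `i < n`), `f_n² = 0`. -/
theorem stmt2 {K E E' : Type*} [Field K]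
    [NonUnitalNonAssocRing E] [Module K E] [SMulCommClass K E E] [IsScalarTower K E E]
    [NonUnitalNonAssocRing E'] [Module K E'] [SMulCommClass K E' E'] [IsScalarTower K E' E']
    (n : ℕ) (hn : 2 ≤ n) (a : Fin n → Fin n → K)
    (e : Module.Basis (Fin n) K E) (f : Module.Basis (Fin n) K E')
    (he0 : ∀ i j : Fin n, i ≠ j → e i * e j = 0)
    (hf0 : ∀ i j : Fin n, i ≠ j → f i * f j = 0)
    (he1 : ∀ i : Fin n, ∀ hi : (i : ℕ) < n - 2,
      e i * e i = a i ⟨(i : ℕ) + 1, by omega⟩ • e ⟨(i : ℕ) + 1, by omega⟩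
        + a i ⟨n - 1, by omega⟩ • e ⟨n - 1, by omega⟩)
    (he2 : e ⟨n - 2, by omega⟩ * e ⟨n - 2, by omega⟩
        = a ⟨n - 2, by omega⟩ ⟨n - 1, by omega⟩ • e ⟨n - 1, by omega⟩)
    (he3 : e ⟨n - 1, by omega⟩ * e ⟨n - 1, by omega⟩ = 0)
    (hne : ∀ i : Fin n, ∀ hi : (i : ℕ) + 1 < n, a i ⟨(i : ℕ) + 1, hi⟩ ≠ 0)
    (hf1 : ∀ i : Fin n, ∀ hi : (i : ℕ) + 1 < n, f i * f i = f ⟨(i : ℕ) + 1, hi⟩)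
    (hf2 : f ⟨n - 1, by omega⟩ * f ⟨n - 1, by omega⟩ = 0) :
    ∃ ψ : E ≃ₗ[K] E', ∀ x y : E, ψ (x * y) = ψ x * ψ y := by
  have hsq : ∀ i : Fin n, ∀ hi : (i : ℕ) + 1 < n,
      e i * e i ∈ span K {e ⟨i + 1, hi⟩, e ⟨n - 1, by omega⟩} ∧
        e.repr (e i * e i) ⟨i + 1, hi⟩ ≠ 0 := by
    rintro ⟨i, -⟩ hi
    dsimp only at hi ⊢
    rcases Nat.lt_or_ge i (n - 2) with hlt | hge
    · have hne_last : (⟨n - 1, by omega⟩ : Fin n) ≠ ⟨i + 1, hi⟩ := by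
        simp only [ne_eq, Fin.mk.injEq]; omega
      rw [he1 _ hlt]
      exact ⟨mem_span_pair.2 ⟨_, _, rfl⟩,
        by simpa [Finsupp.single_apply, hne_last] using hne _ hi⟩
    · obtain rfl : i = n - 2 := by omega
      have hsucc : (⟨n - 2 + 1, hi⟩ : Fin n) = ⟨n - 1, by omega⟩ := Fin.ext (by simp; omega)
      rw [hsucc, he2]
      exact ⟨smul_mem _ _ (subset_span (Set.mem_insert _ _)),
        by simpa [hsucc] using hne ⟨n - 2, by omega⟩ hi⟩
  obtain ⟨g, hg⟩ := e.exists_isNilChain_of_mul_self_mem_span_pair (fun i j => he0 i j)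
    (m := ⟨n - 1, by omega⟩) (by simp; omega) he3 hsq
  refine hg.exists_mulEquiv ⟨fun i j => hf0 i j, hf1, fun i hi => ?_⟩
  rwa [show i = ⟨n - 1, by omega⟩ from Fin.ext (by simp; omega)]
end

section
/- Let E be the n-dimensional evolution algebra (n > 3) with multiplication e_i² = Σ_{j=i+1}^n a_{ij} e_j for i ≤ n−1 and e_n² = 0, where a_{i,i+1} ≠ 0 for all i < n. If there exists a pair (i₀,j₀) with i₀+2 ≤ j₀ < n and a_{i₀ j₀} ≠ 0, then every derivation d of E satisfies d(e_1) = β e_n for some β ∈ K and d(e_i) = 0 for all i ≥ 2; in particular dim Der(E) = 1. -/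
def IsDeriv {K E : Type*} [Field K] [NonUnitalNonAssocRing E] [Module K E]
    (d : E →ₗ[K] E) : Prop :=
  ∀ x y : E, d (x * y) = d x * y + x * d y

def DerSubmodule (K E : Type*) [Field K] [NonUnitalNonAssocRing E]
    [Module K E] [SMulCommClass K E E] [IsScalarTower K E E] :
    Submodule K (Module.End K E) where
  carrier := {d | ∀ x y : E, d (x * y) = d x * y + x * d y}
  zero_mem' := by intro x y; simp
  add_mem' := by
    intro d₁ d₂ h₁ h₂ x y
    simp [h₁ x y, h₂ x y, add_mul, mul_add]
    abel
  smul_mem' := by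
    intro c d h x y
    simp [h x y, smul_add, smul_mul_assoc, mul_smul_comm]

/-!
Write `d (e i) = ∑ k, D k i • e k` and `e i * e i = ∑ k, A i k • e k`. Applying `d` to the
products `e i * e j` gives linear equations between `D` and the strictly upper triangular `A`.
Since the superdiagonal of `A` does not vanish, these force `D` to be diagonal away from its
last row, with `D (i+1) (i+1) = 2 * D i i`; more generally `D k k = 2 * D i i` whenever
`A i k ≠ 0`. Thus `D i i = 2 ^ i * D 0 0`, and the extra entry `A i₀ j₀ ≠ 0` gives
`2 ^ j₀ = 2 ^ (i₀ + 1)` unless `D 0 0 = 0`; in characteristic zero the diagonal vanishes.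
A downward induction along the last row leaves only `D (n-1) 0`, and the corresponding map
`e 0 ↦ e (n-1)`, `e i ↦ 0` is a derivation because `e (n-1)` annihilates `E` and no `e i * e i`
involves `e 0`.
-/

open Module

structure IsSuperdiagTriangular {K : Type*} [Zero K] {n : ℕ} (A : Matrix (Fin n) (Fin n) K) :
    Prop where
  eq_zero_of_le : ∀ i k, k ≤ i → A i k = 0
  superdiag_ne_zero : ∀ i k : Fin n, (k : ℕ) = i + 1 → A i k ≠ 0

/-- With `A i k` the `e k`-coordinate of `e i * e i` and `D k i` that of `d (e i)`, these are the
coordinates of `d (e i * e j) = d (e i) * e j + e i * d (e j)` for `i ≠ j` and for `i = j`. -/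
structure DerivEquations {K ι : Type*} [CommSemiring K] [Fintype ι] (A D : Matrix ι ι K) :
    Prop where
  off_diag : ∀ i j, i ≠ j → ∀ k, D i j * A i k + D j i * A j k = 0
  diag : ∀ i k, ∑ j, A i j * D k j = 2 * D i i * A i k

section EvolutionBasis

variable {K E ι : Type*} [CommSemiring K] [NonUnitalNonAssocSemiring E] [Module K E]
  [Fintype ι] {e : Basis ι K E}

theorem mul_basis_eq_repr_smul [IsScalarTower K E E] (he : ∀ i j, i ≠ j → e i * e j = 0)
    (x : E) (j : ι) : x * e j = e.repr x j • (e j * e j) := by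
  conv_lhs => rw [← e.sum_repr x]
  rw [Finset.sum_mul, Finset.sum_eq_single j]
  · exact smul_mul_assoc _ _ _
  · intro k _ hk
    rw [smul_mul_assoc, he k j hk, smul_zero]
  · simp

theorem basis_mul_eq_repr_smul [SMulCommClass K E E] (he : ∀ i j, i ≠ j → e i * e j = 0)
    (x : E) (i : ι) : e i * x = e.repr x i • (e i * e i) := by
  conv_lhs => rw [← e.sum_repr x]
  rw [Finset.mul_sum, Finset.sum_eq_single i]
  · exact mul_smul_comm _ _ _
  · intro k _ hk
    rw [mul_smul_comm, he i k hk.symm, smul_zero]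
  · simp

theorem repr_mul_eq_sum [SMulCommClass K E E] [IsScalarTower K E E]
    (he : ∀ i j, i ≠ j → e i * e j = 0) (x y : E) (k : ι) :
    e.repr (x * y) k = ∑ i, e.repr x i * e.repr y i * e.repr (e i * e i) k := by
  conv_lhs => rw [← e.sum_repr y, Finset.mul_sum]
  simp only [mul_smul_comm, fun i => mul_basis_eq_repr_smul he x i, smul_smul, map_sum,
    map_smul, Finsupp.coe_finsetSum, Finsupp.coe_smul, Finset.sum_apply, Pi.smul_apply,
    smul_eq_mul]
  exact Finset.sum_congr rfl fun i _ => by ring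

end EvolutionBasis

theorem Module.Basis.eq_smul_coord_smulRight {K E ι : Type*} [CommSemiring K] [AddCommMonoid E]
    [Module K E] (e : Basis ι K E) {f : Module.End K E} {o N : ι}
    (hf : ∀ k i, (k ≠ N ∨ i ≠ o) → e.repr (f (e i)) k = 0) :
    f = e.repr (f (e o)) N • (e.coord o).smulRight (e N) := by
  classical
  refine e.ext fun i => e.ext_elem fun k => ?_
  simp only [LinearMap.smul_apply, LinearMap.smulRight_apply, Basis.coord_apply,
    Basis.repr_self, map_smul, Finsupp.smul_apply, Finsupp.single_apply, smul_eq_mul]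
  by_cases h : k = N ∧ i = o
  · obtain ⟨rfl, rfl⟩ := h
    simp
  · rw [hf k i (not_and_or.1 h)]
    split_ifs <;> simp_all

section Derivation

variable {K E ι : Type*} [Field K] [NonUnitalNonAssocRing E] [Module K E]
  [SMulCommClass K E E] [IsScalarTower K E E] [Fintype ι] {e : Basis ι K E}

theorem isDeriv_coord_smulRight (he : ∀ i j, i ≠ j → e i * e j = 0) {i₀ N : ι}
    (hN : e N * e N = 0) (h₀ : ∀ i, e.repr (e i * e i) i₀ = 0) :
    IsDeriv ((e.coord i₀).smulRight (e N)) := by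
  have hleft (y : E) : e N * y = 0 := by rw [basis_mul_eq_repr_smul he, hN, smul_zero]
  have hright (x : E) : x * e N = 0 := by rw [mul_basis_eq_repr_smul he, hN, smul_zero]
  have hprod (x y : E) : e.repr (x * y) i₀ = 0 := by
    simp only [repr_mul_eq_sum he x y, h₀, mul_zero, Finset.sum_const_zero]
  intro x y
  simp only [LinearMap.smulRight_apply, Basis.coord_apply, smul_mul_assoc, mul_smul_comm,
    hleft, hright, hprod, smul_zero, zero_smul, add_zero]

theorem IsDeriv.derivEquations (he : ∀ i j, i ≠ j → e i * e j = 0) {d : Module.End K E}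
    (hd : IsDeriv d) :
    DerivEquations (fun i k => e.repr (e i * e i) k) (fun k i => e.repr (d (e i)) k) := by
  refine ⟨fun i j hij k => ?_, fun i k => ?_⟩
  · have h := hd (e i) (e j)
    rw [he i j hij, map_zero, mul_basis_eq_repr_smul he (d (e i)),
      basis_mul_eq_repr_smul he (d (e j))] at h
    simpa [add_comm] using congr(e.repr $h k).symm
  · have h := hd (e i) (e i)
    rw [mul_basis_eq_repr_smul he (d (e i)), basis_mul_eq_repr_smul he (d (e i))] at h
    conv_lhs at h => rw [← e.sum_repr (e i * e i)]
    have := congr(e.repr $h k)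
    simp only [map_sum, map_smul, map_add, Finsupp.coe_finsetSum, Finsupp.coe_smul,
      Finset.sum_apply, Pi.smul_apply, smul_eq_mul, Finsupp.coe_add, Pi.add_apply] at this
    rw [this]
    ring

end Derivation

namespace DerivEquations

variable {K : Type*} [CommRing K] [IsDomain K] {n : ℕ} {A D : Matrix (Fin n) (Fin n) K}

theorem upper_eq_zero (hD : DerivEquations A D) (hA : IsSuperdiagTriangular A) {i j : Fin n}
    (hij : i < j) : D i j = 0 := by
  have hi : (i : ℕ) + 1 < n := by omega
  have h := hD.off_diag i j hij.ne ⟨i + 1, hi⟩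
  rw [hA.eq_zero_of_le j _ (Fin.le_def.2 (show (i : ℕ) + 1 ≤ j by omega)), mul_zero,
    add_zero] at h
  exact (mul_eq_zero.1 h).resolve_right (hA.superdiag_ne_zero i _ rfl)

theorem lower_eq_zero (hD : DerivEquations A D) (hA : IsSuperdiagTriangular A) {i j : Fin n}
    (hij : i < j) (hj : (j : ℕ) + 1 < n) : D j i = 0 := by
  have h := hD.off_diag i j hij.ne ⟨j + 1, hj⟩
  rw [hD.upper_eq_zero hA hij, zero_mul, zero_add] at h
  exact (mul_eq_zero.1 h).resolve_right (hA.superdiag_ne_zero j _ rfl)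

theorem diag_eq_two_mul (hD : DerivEquations A D) (hA : IsSuperdiagTriangular A) {i k : Fin n}
    (hk : (k : ℕ) + 1 < n) (hik : A i k ≠ 0) : D k k = 2 * D i i := by
  have h := hD.diag i k
  rw [Finset.sum_eq_single k, mul_comm] at h
  · exact mul_right_cancel₀ hik h
  · intro j _ hjk
    rcases hjk.lt_or_gt with hjk | hjk
    · rw [hD.lower_eq_zero hA hjk hk, mul_zero]
    · rw [hD.upper_eq_zero hA hjk, mul_zero]
  · simp

theorem diag_eq_two_pow_mul (hD : DerivEquations A D) (hA : IsSuperdiagTriangular A)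
    (i : Fin n) (hi : (i : ℕ) + 1 < n) :
    D i i = 2 ^ (i : ℕ) * D ⟨0, i.pos⟩ ⟨0, i.pos⟩ := by
  obtain ⟨i, hin⟩ := i
  induction i with
  | zero => simp
  | succ i ih =>
    rw [hD.diag_eq_two_mul hA hi (hA.superdiag_ne_zero ⟨i, by omega⟩ _ rfl),
      ih (by omega) (by simp only; omega), pow_succ]
    ring

theorem diag_eq_zero [CharZero K] (hD : DerivEquations A D) (hA : IsSuperdiagTriangular A)
    (hex : ∃ i j : Fin n, (i : ℕ) + 2 ≤ j ∧ (j : ℕ) + 1 < n ∧ A i j ≠ 0)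
    {i : Fin n} (hi : (i : ℕ) + 1 < n) : D i i = 0 := by
  obtain ⟨i₀, j₀, hij, hj, ha⟩ := hex
  have h := hD.diag_eq_two_mul hA hj ha
  rw [hD.diag_eq_two_pow_mul hA j₀ hj, hD.diag_eq_two_pow_mul hA i₀ (by omega)] at h
  have hpow : (2 : K) ^ (j₀ : ℕ) - 2 ^ ((i₀ : ℕ) + 1) ≠ 0 := by
    refine sub_ne_zero.2 fun h => ?_
    have := Nat.pow_right_injective le_rfl
      (by exact_mod_cast h : 2 ^ (j₀ : ℕ) = 2 ^ ((i₀ : ℕ) + 1))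
    omega
  have h₀ : D ⟨0, i.pos⟩ ⟨0, i.pos⟩ = 0 := by
    refine (mul_eq_zero.1 ?_).resolve_left hpow
    linear_combination h
  rw [hD.diag_eq_two_pow_mul hA i hi, h₀, mul_zero]

theorem eq_zero_of_lt_last [CharZero K] (hD : DerivEquations A D)
    (hA : IsSuperdiagTriangular A)
    (hex : ∃ i j : Fin n, (i : ℕ) + 2 ≤ j ∧ (j : ℕ) + 1 < n ∧ A i j ≠ 0)
    {k : Fin n} (hk : (k : ℕ) + 1 < n) (i : Fin n) : D k i = 0 := by
  rcases lt_trichotomy k i with hki | rfl | hki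
  · exact hD.upper_eq_zero hA hki
  · exact hD.diag_eq_zero hA hex hk
  · exact hD.lower_eq_zero hA hki hk

theorem last_row_eq_zero [CharZero K] (hD : DerivEquations A D) (hA : IsSuperdiagTriangular A)
    (hex : ∃ i j : Fin n, (i : ℕ) + 2 ≤ j ∧ (j : ℕ) + 1 < n ∧ A i j ≠ 0)
    {N j : Fin n} (hN : (N : ℕ) + 1 = n) (hj : 1 ≤ (j : ℕ)) : D N j = 0 := by
  induction j using WellFoundedGT.induction with
  | ind j ih =>
  let p : Fin n := ⟨j - 1, by omega⟩
  have hpj : (j : ℕ) = p + 1 := by simp only [p]; omega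
  have h := hD.diag p N
  rw [hD.diag_eq_zero hA hex (show (p : ℕ) + 1 < n by omega), mul_zero, zero_mul,
    Finset.sum_eq_single j] at h
  · exact (mul_eq_zero.1 h).resolve_left (hA.superdiag_ne_zero p j hpj)
  · intro l _ hlj
    rcases hlj.lt_or_gt with hlj | hlj
    · rw [hA.eq_zero_of_le p l (Fin.le_def.2 (by omega)), zero_mul]
    · rw [ih l hlj (by omega), mul_zero]
  · simp

theorem eq_zero_of_ne [CharZero K] (hD : DerivEquations A D) (hA : IsSuperdiagTriangular A)
    (hex : ∃ i j : Fin n, (i : ℕ) + 2 ≤ j ∧ (j : ℕ) + 1 < n ∧ A i j ≠ 0)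
    {o N : Fin n} (ho : (o : ℕ) = 0) (hN : (N : ℕ) + 1 = n) {k i : Fin n}
    (hki : k ≠ N ∨ i ≠ o) : D k i = 0 := by
  by_cases hk : (k : ℕ) + 1 < n
  · exact hD.eq_zero_of_lt_last hA hex hk i
  · obtain rfl : k = N := Fin.ext (by omega)
    have hi : i ≠ o := hki.resolve_left fun h => h rfl
    exact hD.last_row_eq_zero hA hex hN (by rw [Ne, Fin.ext_iff] at hi; omega)

end DerivEquations

section Chain

variable {K E : Type*} [CommSemiring K] [NonUnitalNonAssocSemiring E] [Module K E] {n : ℕ}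
  {a : Fin n → Fin n → K} {e : Basis (Fin n) K E}

theorem repr_mul_self_of_eq_sum
    (hsq : ∀ i : Fin n, e i * e i = ∑ j ∈ Finset.univ.filter (fun j => i < j), a i j • e j)
    (i k : Fin n) : e.repr (e i * e i) k = if i < k then a i k else 0 := by
  simp [hsq, Finsupp.finsetSum_apply, Finsupp.single_apply]

theorem isSuperdiagTriangular_of_eq_sum
    (hsq : ∀ i : Fin n, e i * e i = ∑ j ∈ Finset.univ.filter (fun j => i < j), a i j • e j)
    (hsub : ∀ i : Fin n, ∀ hi : (i : ℕ) + 1 < n, a i ⟨(i : ℕ) + 1, hi⟩ ≠ 0) :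
    IsSuperdiagTriangular (fun i k => e.repr (e i * e i) k) := by
  refine ⟨fun i k hki => by simp [repr_mul_self_of_eq_sum hsq, hki.not_gt], fun i k hk => ?_⟩
  rw [show k = ⟨i + 1, by omega⟩ from Fin.ext hk]
  simpa [repr_mul_self_of_eq_sum hsq, Fin.lt_def] using hsub i (by omega)

end Chain

/-- for the nilpotent evolution algebra (n > 3) with
`e_i² = Σ_{j>i} a_{ij} e_j`, `a_{i,i+1} ≠ 0`, if some `a_{i₀j₀} ≠ 0` with
`i₀+2 ≤ j₀ < n`, then every derivation `d` satisfies `d(e_1) = β e_n` and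
`d(e_i) = 0` for `i ≥ 2`; in particular `dim Der(E) = 1`. -/
theorem stmt4 {K E : Type*} [Field K] [CharZero K] [NonUnitalNonAssocRing E]
    [Module K E] [SMulCommClass K E E] [IsScalarTower K E E]
    (n : ℕ) (hn : 3 < n) (a : Fin n → Fin n → K) (e : Module.Basis (Fin n) K E)
    (hzero : ∀ i j : Fin n, i ≠ j → e i * e j = 0)
    (hsq : ∀ i : Fin n, e i * e i = ∑ j ∈ Finset.univ.filter (fun j => i < j), a i j • e j)
    (hsub : ∀ i : Fin n, ∀ hi : (i : ℕ) + 1 < n, a i ⟨(i : ℕ) + 1, hi⟩ ≠ 0)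
    (hex : ∃ i j : Fin n, (i : ℕ) + 2 ≤ (j : ℕ) ∧ (j : ℕ) < n - 1 ∧ a i j ≠ 0) :
    (∀ d : Module.End K E, IsDeriv d →
        (∃ β : K, d (e ⟨0, by omega⟩) = β • e ⟨n - 1, by omega⟩) ∧
        ∀ i : Fin n, 1 ≤ (i : ℕ) → d (e i) = 0) ∧
    Module.finrank K ↥(DerSubmodule K E) = 1 := by
  set o : Fin n := ⟨0, by omega⟩
  set N : Fin n := ⟨n - 1, by omega⟩
  have hA := isSuperdiagTriangular_of_eq_sum (e := e) hsq hsub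
  have hexA :
      ∃ i j : Fin n, (i : ℕ) + 2 ≤ j ∧ (j : ℕ) + 1 < n ∧ e.repr (e i * e i) j ≠ 0 := by
    obtain ⟨i, j, hij, hj, ha⟩ := hex
    refine ⟨i, j, hij, by omega, ?_⟩
    simpa [repr_mul_self_of_eq_sum hsq, Fin.lt_def, show (i : ℕ) < j by omega]
  have hform (d : Module.End K E) (hd : IsDeriv d) :
      d = e.repr (d (e o)) N • (e.coord o).smulRight (e N) :=
    e.eq_smul_coord_smulRight fun _ _ =>
      (hd.derivEquations hzero).eq_zero_of_ne hA hexA rfl (by simp only [N]; omega)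
  have hN : e N * e N = 0 :=
    e.repr.map_eq_zero_iff.1 <| Finsupp.ext fun k =>
      hA.eq_zero_of_le N k (Fin.le_def.2 (show (k : ℕ) ≤ n - 1 by omega))
  have hd₀ : IsDeriv ((e.coord o).smulRight (e N)) :=
    isDeriv_coord_smulRight hzero hN fun i => hA.eq_zero_of_le i o (Fin.le_def.2 (Nat.zero_le _))
  refine ⟨fun d hd => ⟨⟨e.repr (d (e o)) N, ?_⟩, fun i hi => ?_⟩, ?_⟩
  · conv_lhs => rw [hform d hd]
    simp
  · have hio : o ≠ i := Fin.ne_of_val_ne (show 0 ≠ (i : ℕ) by omega)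
    rw [hform d hd]
    simp [hio]
  · have hspan : DerSubmodule K E = K ∙ (e.coord o).smulRight (e N) :=
      le_antisymm (fun d hd => Submodule.mem_span_singleton.2 ⟨_, (hform d hd).symm⟩)
        ((Submodule.span_singleton_le_iff_mem _ _).2 hd₀)
    rw [hspan, finrank_span_singleton]
    intro h
    exact e.ne_zero N (by simpa using LinearMap.congr_fun h (e o))
end

section
/- For any n-dimensional nilpotent evolution algebra E with dim E² = n−1 (equivalently, of maximal nilindex 2^{n−1}+1), the space of derivations satisfies 1 ≤ dim Der(E) ≤ 2. -/
/-!
Nilpotency makes the relation "`e j` occurs in `e i ^ 2`" well founded, so after reordering the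
natural basis every `e i ^ 2` lies in the span of the `e j` with `j > i`; `dim E² = n - 1` then
forces every superdiagonal coefficient of `e i ^ 2` at `e (i + 1)` to be nonzero. Hence the
iterated squares of `e 0` form a basis and a derivation `d` is determined by `d (e 0)`, which the
Leibniz rule confines to the span of `e 0` and of the last basis vector `e (n - 1)`. Conversely
`e 0 ↦ e (n - 1)`, `e i ↦ 0` otherwise, is a nonzero derivation.
-/

/-- The span of all products `uv`, `u ∈ U`, `v ∈ V`, for submodules of an algebra. -/
def subMul {K E : Type*} [Field K] [NonUnitalNonAssocRing E] [Module K E]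
    (U V : Submodule K E) : Submodule K E :=
  Submodule.span K {z : E | ∃ u ∈ U, ∃ v ∈ V, u * v = z}

/-- The powers `E^1 = E`, `E^k = Σ_{i=1}^{k-1} E^i E^{k-i}`. -/
def Epow (K E : Type*) [Field K] [NonUnitalNonAssocRing E] [Module K E] : ℕ → Submodule K E
  | 0 => ⊥
  | 1 => ⊤
  | k + 2 => ⨆ i ∈ Finset.Icc 1 (k + 1), subMul (Epow K E i) (Epow K E (k + 2 - i))
decreasing_by
  all_goals simp only [Finset.mem_Icc] at *; omega

open Module

def IsNaturalBasis {K E ι : Type*} [Field K] [NonUnitalNonAssocRing E] [Module K E]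
    (e : Basis ι K E) : Prop :=
  ∀ i j, i ≠ j → e i * e j = 0

section Epow

variable {K E : Type*} [Field K] [NonUnitalNonAssocRing E] [Module K E]

theorem Epow_one : Epow K E 1 = ⊤ := by
  rw [Epow]

theorem Epow_two : Epow K E 2 = subMul (⊤ : Submodule K E) ⊤ := by
  rw [show (2 : ℕ) = 0 + 2 from rfl, Epow]
  simp [Epow_one]

theorem mul_mem_Epow_succ {m : ℕ} (hm : 1 ≤ m) {x : E} (hx : x ∈ Epow K E m) (y : E) :
    x * y ∈ Epow K E (m + 1) := by
  obtain ⟨k, rfl⟩ : ∃ k, m = k + 1 := ⟨m - 1, by omega⟩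
  have hxy : x * y ∈ subMul (Epow K E (k + 1)) (Epow K E (k + 2 - (k + 1))) :=
    Submodule.subset_span ⟨x, hx, y, by simp [Epow_one], rfl⟩
  rw [Epow]
  exact Submodule.mem_iSup_of_mem (k + 1) (Submodule.mem_iSup_of_mem (by simp) hxy)

end Epow

theorem exists_perm_lt_of_wellFounded {n : ℕ} {r : Fin n → Fin n → Prop} (hr : WellFounded r) :
    ∃ σ : Equiv.Perm (Fin n), ∀ i j, r (σ j) (σ i) → i < j := by
  have : IsWellFounded (Fin n) r := ⟨hr⟩
  refine ⟨Tuple.sort (OrderDual.toDual ∘ IsWellFounded.rank r), fun i j hji => ?_⟩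
  by_contra! hij
  have := Tuple.monotone_sort (OrderDual.toDual ∘ IsWellFounded.rank r) hij
  exact (IsWellFounded.rank_lt_of_rel hji).not_ge this

section Derivation

variable {K E : Type*} [Field K] [NonUnitalNonAssocRing E] [Module K E]
  [SMulCommClass K E E] [IsScalarTower K E E]

theorem mem_derSubmodule_iff {d : Module.End K E} :
    d ∈ DerSubmodule K E ↔ ∀ x y, d (x * y) = d x * y + x * d y :=
  Iff.rfl

theorem apply_iterate_mul_self_eq_zero {d : Module.End K E} (hd : d ∈ DerSubmodule K E)
    {x : E} (hx : d x = 0) (l : ℕ) : d ((fun y => y * y)^[l] x) = 0 := by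
  induction l with
  | zero => exact hx
  | succ l ih => rw [Function.iterate_succ_apply', mem_derSubmodule_iff.mp hd, ih, zero_mul,
      mul_zero, add_zero]

end Derivation

namespace IsNaturalBasis

variable {K E : Type*} [Field K] [NonUnitalNonAssocRing E] [Module K E]
  [SMulCommClass K E E] [IsScalarTower K E E]

section General

variable {ι : Type*} [Fintype ι] {e : Basis ι K E}

theorem mul_eq_sum (he : IsNaturalBasis e) (x y : E) :
    x * y = ∑ i, (e.repr x i * e.repr y i) • (e i * e i) := by
  conv_lhs => rw [← e.sum_repr x, ← e.sum_repr y]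
  simp_rw [Finset.sum_mul, Finset.mul_sum, smul_mul_smul_comm]
  refine Finset.sum_congr rfl fun i _ => Finset.sum_eq_single i (fun j _ hji => ?_) (by simp)
  rw [he i j hji.symm, smul_zero]

theorem repr_mul (he : IsNaturalBasis e) (x y : E) (j : ι) :
    e.repr (x * y) j = ∑ i, e.repr x i * e.repr y i * e.repr (e i * e i) j := by
  simp [he.mul_eq_sum x y, Finsupp.finsetSum_apply]

theorem mul_basis (he : IsNaturalBasis e) (x : E) (j : ι) :
    x * e j = e.repr x j • (e j * e j) := by
  classical
  rw [he.mul_eq_sum, Finset.sum_eq_single j (fun i _ hij => by simp [hij]) (by simp)]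
  simp

theorem basis_mul (he : IsNaturalBasis e) (x : E) (j : ι) :
    e j * x = e.repr x j • (e j * e j) := by
  classical
  rw [he.mul_eq_sum, Finset.sum_eq_single j (fun i _ hij => by simp [hij]) (by simp)]
  simp

theorem Epow_two_eq_span (he : IsNaturalBasis e) :
    Epow K E 2 = Submodule.span K (Set.range fun i => e i * e i) := by
  rw [Epow_two, subMul]
  refine le_antisymm (Submodule.span_le.mpr ?_) (Submodule.span_le.mpr ?_)
  · rintro _ ⟨x, -, y, -, rfl⟩
    rw [he.mul_eq_sum]
    exact Submodule.sum_mem _ fun i _ => Submodule.smul_mem _ _ (Submodule.subset_span ⟨i, rfl⟩)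
  · rintro _ ⟨i, rfl⟩
    exact Submodule.subset_span ⟨e i, trivial, e i, trivial, rfl⟩

theorem wellFounded_of_nilpotent (he : IsNaturalBasis e) (hnil : ∃ m, 1 ≤ m ∧ Epow K E m = ⊥) :
    WellFounded fun j i => e.repr (e i * e i) j ≠ 0 := by
  refine wellFounded_iff_isEmpty_descending_chain.mpr ⟨fun ⟨f, hf⟩ => ?_⟩
  -- right multiplication by `e (f k)` moves a nonzero `f k`-coordinate to the `f (k + 1)`-one
  have hchain : ∀ k, ∃ x ∈ Epow K E (k + 1), e.repr x (f k) ≠ 0 := by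
    intro k
    induction k with
    | zero => exact ⟨e (f 0), by simp [Epow_one]⟩
    | succ k ih =>
      obtain ⟨x, hx, hxk⟩ := ih
      refine ⟨x * e (f k), mul_mem_Epow_succ (by omega) hx _, ?_⟩
      rw [he.mul_basis, map_smul, Finsupp.smul_apply, smul_eq_mul]
      exact mul_ne_zero hxk (hf k)
  obtain ⟨m, hm, hbot⟩ := hnil
  obtain ⟨x, hx, hxf⟩ := hchain (m - 1)
  rw [Nat.sub_add_cancel hm, hbot, Submodule.mem_bot] at hx
  simp [hx] at hxf

theorem repr_apply_smul_add_eq_zero (he : IsNaturalBasis e) {d : Module.End K E}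
    (hd : d ∈ DerSubmodule K E) {i j : ι} (hij : i ≠ j) :
    e.repr (d (e i)) j • (e j * e j) + e.repr (d (e j)) i • (e i * e i) = 0 := by
  rw [← he.mul_basis, ← he.basis_mul, ← mem_derSubmodule_iff.mp hd, he i j hij, map_zero]

theorem coord_smulRight_mem_derSubmodule (he : IsNaturalBasis e) {i k : ι}
    (hk : e k * e k = 0) (hi : ∀ s, e.repr (e s * e s) i = 0) :
    (e.coord i).smulRight (e k) ∈ DerSubmodule K E := by
  intro x y
  have hxy : e.coord i (x * y) = 0 := by
    rw [Basis.coord_apply, he.repr_mul]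
    simp [hi]
  simp only [LinearMap.smulRight_apply, hxy, zero_smul, smul_mul_assoc, mul_smul_comm]
  rw [he.basis_mul y k, he.mul_basis x k, hk]
  simp

end General

theorem exists_triangular {n : ℕ} {e : Basis (Fin n) K E} (he : IsNaturalBasis e)
    (hnil : ∃ m, 1 ≤ m ∧ Epow K E m = ⊥) :
    ∃ f : Basis (Fin n) K E, IsNaturalBasis f ∧ ∀ i j, j ≤ i → f.repr (f i * f i) j = 0 := by
  obtain ⟨σ, hσ⟩ := exists_perm_lt_of_wellFounded (he.wellFounded_of_nilpotent hnil)
  refine ⟨e.reindex σ.symm, fun i j hij => ?_, fun i j hji => ?_⟩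
  · simpa using he _ _ (σ.injective.ne hij)
  · simpa using not_imp_comm.mp (hσ i j) hji.not_gt

section Triangular

variable {n : ℕ} {e : Basis (Fin (n + 1)) K E}

/-- If the superdiagonal entry of row `i` vanished, `E²` would lie in the span of the `i` squares
`e s ^ 2`, `s < i`, and of the `n - 1 - i` basis vectors beyond `i + 1`. -/
theorem superdiag_ne_zero (he : IsNaturalBasis e)
    (htri : ∀ i j, j ≤ i → e.repr (e i * e i) j = 0)
    (hdim : Module.finrank K (Epow K E 2) = n) (i : Fin n) :
    e.repr (e i.castSucc * e i.castSucc) i.succ ≠ 0 := by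
  classical
  intro hi
  have : Module.Finite K E := Module.Finite.of_basis e
  set A := Finset.image (fun s => e s * e s) (Finset.Iio i.castSucc)
  set B := Finset.image e (Finset.Ioi i.succ)
  have hle : Epow K E 2 ≤ Submodule.span K A ⊔ Submodule.span K B := by
    rw [he.Epow_two_eq_span, Submodule.span_le]
    rintro _ ⟨s, rfl⟩
    by_cases hs : s < i.castSucc
    · exact Submodule.mem_sup_left (Submodule.subset_span
        (Finset.mem_image_of_mem _ (Finset.mem_Iio.mpr hs)))
    refine Submodule.mem_sup_right ?_
    rw [Finset.coe_image, Basis.mem_span_image]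
    intro t ht
    have hst : s < t := lt_of_not_ge fun hts => Finsupp.mem_support_iff.mp ht (htri s t hts)
    have hsi : s = i.castSucc → t ≠ i.succ := by
      rintro rfl rfl
      exact Finsupp.mem_support_iff.mp ht hi
    simp only [Finset.coe_Ioi, Set.mem_Ioi]
    simp only [Fin.lt_def, Fin.val_succ, Fin.val_castSucc, ne_eq, Fin.ext_iff] at hs hst hsi ⊢
    omega
  have hA : Set.finrank K (A : Set E) ≤ i := by
    refine (finrank_span_finset_le_card A).trans (Finset.card_image_le.trans ?_)
    simp
  have hB : Set.finrank K (B : Set E) ≤ n - (i + 1) := by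
    refine (finrank_span_finset_le_card B).trans (Finset.card_image_le.trans ?_)
    simp
  have := (Submodule.finrank_mono hle).trans (Submodule.finrank_add_le_finrank_add_finrank _ _)
  unfold Set.finrank at hA hB
  omega

theorem repr_iterate_mul_self (he : IsNaturalBasis e)
    (htri : ∀ i j, j ≤ i → e.repr (e i * e i) j = 0)
    (hsup : ∀ i : Fin n, e.repr (e i.castSucc * e i.castSucc) i.succ ≠ 0) (l : Fin (n + 1)) :
    (∀ j < l, e.repr ((fun y => y * y)^[l] (e 0)) j = 0) ∧
      e.repr ((fun y => y * y)^[l] (e 0)) l ≠ 0 := by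
  induction l using Fin.induction with
  | zero => exact ⟨fun j hj => absurd hj (Fin.not_lt_zero j), by simp⟩
  | succ i ih =>
    set x := (fun y => y * y)^[i.castSucc] (e 0)
    obtain ⟨hlow, hdiag⟩ := ih
    have hsucc : (fun y => y * y)^[i.succ] (e 0) = x * x := by
      rw [Fin.val_succ, Function.iterate_succ_apply']; rfl
    have hterm : ∀ s j, s ≠ i.castSucc → j ≤ i.succ →
        e.repr x s * e.repr x s * e.repr (e s * e s) j = 0 := by
      intro s j hs hj
      rcases lt_or_gt_of_ne hs with hs | hs
      · simp [hlow s hs]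
      · rw [htri s j (hj.trans (Fin.castSucc_lt_iff_succ_le.mp hs)), mul_zero]
    rw [hsucc]
    refine ⟨fun j hj => ?_, ?_⟩
    · rw [he.repr_mul]
      refine Finset.sum_eq_zero fun s _ => ?_
      by_cases hs : s = i.castSucc
      · rw [hs, htri _ j (Fin.le_castSucc_iff.mpr hj), mul_zero]
      · exact hterm s j hs hj.le
    · rw [he.repr_mul, Finset.sum_eq_single i.castSucc (fun s _ hs => hterm s _ hs le_rfl)
        (by simp)]
      exact mul_ne_zero (mul_ne_zero hdiag hdiag) (hsup i)

/-- By `repr_iterate_mul_self`, the iterated squares of `e 0` have a triangular matrix with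
nonzero diagonal in the basis `e`. -/
theorem span_range_iterate_mul_self (he : IsNaturalBasis e)
    (htri : ∀ i j, j ≤ i → e.repr (e i * e i) j = 0)
    (hsup : ∀ i : Fin n, e.repr (e i.castSucc * e i.castSucc) i.succ ≠ 0) :
    Submodule.span K (Set.range fun l : Fin (n + 1) => (fun y => y * y)^[l] (e 0)) = ⊤ := by
  refine (e.is_basis_iff_det.mpr ?_).2
  have hlower : (e.toMatrix fun l : Fin (n + 1) => (fun y => y * y)^[l] (e 0)).IsLowerTriangular :=
    fun i j hij => by
      rw [Basis.toMatrix_apply]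
      exact (he.repr_iterate_mul_self htri hsup j).1 i hij
  rw [Basis.det_apply, Matrix.det_of_isLowerTriangular _ hlower, isUnit_iff_ne_zero,
    Finset.prod_ne_zero_iff]
  intro l _
  rw [Basis.toMatrix_apply]
  exact (he.repr_iterate_mul_self htri hsup l).2

theorem eq_zero_of_apply_basis_zero (he : IsNaturalBasis e)
    (htri : ∀ i j, j ≤ i → e.repr (e i * e i) j = 0)
    (hsup : ∀ i : Fin n, e.repr (e i.castSucc * e i.castSucc) i.succ ≠ 0)
    {d : Module.End K E} (hd : d ∈ DerSubmodule K E) (h0 : d (e 0) = 0) : d = 0 :=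
  LinearMap.ext_on_range (he.span_range_iterate_mul_self htri hsup)
    fun l => apply_iterate_mul_self_eq_zero hd h0 l

/-- The Leibniz rule on `e 0 * e j = 0`, read in the coordinate `1`, kills the `0`-coordinate of
`d (e j)`, and then `e j ^ 2 ≠ 0` kills the `j`-coordinate of `d (e 0)`. -/
theorem repr_apply_basis_zero_eq_zero (he : IsNaturalBasis e)
    (htri : ∀ i j, j ≤ i → e.repr (e i * e i) j = 0)
    (hsup : ∀ i : Fin n, e.repr (e i.castSucc * e i.castSucc) i.succ ≠ 0)
    {d : Module.End K E} (hd : d ∈ DerSubmodule K E) {j : Fin (n + 1)} (hj0 : j ≠ 0)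
    (hjl : j ≠ Fin.last n) : e.repr (d (e 0)) j = 0 := by
  obtain ⟨k, rfl⟩ := Fin.exists_succ_eq.mpr hj0
  obtain ⟨k', hk'⟩ := Fin.exists_castSucc_eq.mpr hjl
  set z : Fin n := ⟨0, k.pos⟩
  have hrel := he.repr_apply_smul_add_eq_zero hd hj0.symm
  have hcoord := congrArg (fun x => e.repr x z.succ) hrel
  simp only [map_add, map_smul, Finsupp.add_apply, Finsupp.smul_apply, smul_eq_mul,
    map_zero, Finsupp.coe_zero, Pi.zero_apply] at hcoord
  rw [htri _ _ (Fin.succ_le_succ_iff.mpr (Nat.zero_le k)), mul_zero, zero_add] at hcoord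
  have hj : e.repr (d (e k.succ)) 0 = 0 :=
    (mul_eq_zero.mp hcoord).resolve_right (hsup z)
  rw [hj, zero_smul, add_zero] at hrel
  have hsq : e k.succ * e k.succ ≠ 0 := by
    rw [← hk']
    intro h
    exact hsup k' (by rw [h, map_zero, Finsupp.coe_zero, Pi.zero_apply])
  exact (smul_eq_zero.mp hrel).resolve_right hsq

theorem one_le_finrank_derSubmodule (he : IsNaturalBasis e)
    (htri : ∀ i j, j ≤ i → e.repr (e i * e i) j = 0) :
    1 ≤ Module.finrank K (DerSubmodule K E) := by
  have : Module.Finite K E := Module.Finite.of_basis e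
  have hlast : e (Fin.last n) * e (Fin.last n) = 0 :=
    e.repr.injective (Finsupp.ext fun j => by simp [htri _ j (Fin.le_last j)])
  have hd := he.coord_smulRight_mem_derSubmodule hlast fun s => htri s 0 (Fin.zero_le s)
  refine Submodule.one_le_finrank_iff.mpr fun hbot => e.ne_zero (Fin.last n) ?_
  have := congrArg (· (e 0)) ((Submodule.eq_bot_iff _).mp hbot _ hd)
  simpa using this

/-- A derivation is determined by the two outer coordinates of `d (e 0)`. -/
theorem finrank_derSubmodule_le_two (he : IsNaturalBasis e)
    (htri : ∀ i j, j ≤ i → e.repr (e i * e i) j = 0)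
    (hsup : ∀ i : Fin n, e.repr (e i.castSucc * e i.castSucc) i.succ ≠ 0) :
    Module.finrank K (DerSubmodule K E) ≤ 2 := by
  have : Module.Finite K E := Module.Finite.of_basis e
  let Φ : DerSubmodule K E →ₗ[K] K × K := (e.coord 0).prod (e.coord (Fin.last n)) ∘ₗ
    LinearMap.applyₗ (e 0) ∘ₗ (DerSubmodule K E).subtype
  have hΦ : Function.Injective Φ := by
    rw [← LinearMap.ker_eq_bot, Submodule.eq_bot_iff]
    rintro ⟨d, hd⟩ hΦd
    obtain ⟨h0, hlast⟩ := Prod.ext_iff.mp hΦd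
    refine Subtype.ext (he.eq_zero_of_apply_basis_zero htri hsup hd (e.repr.injective ?_))
    ext j
    by_cases hj0 : j = 0
    · subst hj0; simpa [Φ] using h0
    by_cases hjl : j = Fin.last n
    · subst hjl; simpa [Φ] using hlast
    simpa using he.repr_apply_basis_zero_eq_zero htri hsup hd hj0 hjl
  simpa using LinearMap.finrank_le_finrank_of_injective hΦ

end Triangular

end IsNaturalBasis

theorem stmt6_general {K E : Type*} [Field K] [NonUnitalNonAssocRing E]
    [Module K E] [SMulCommClass K E E] [IsScalarTower K E E]
    (n : ℕ) (hn : 1 ≤ n) (e : Module.Basis (Fin n) K E)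
    (hzero : ∀ i j : Fin n, i ≠ j → e i * e j = 0)
    (hnil : ∃ m : ℕ, 1 ≤ m ∧ Epow K E m = ⊥)
    (hdim : Module.finrank K ↥(Epow K E 2) = n - 1) :
    1 ≤ Module.finrank K ↥(DerSubmodule K E) ∧
      Module.finrank K ↥(DerSubmodule K E) ≤ 2 := by
  obtain ⟨m, rfl⟩ : ∃ m, n = m + 1 := ⟨n - 1, by omega⟩
  obtain ⟨f, hf, htri⟩ := IsNaturalBasis.exists_triangular hzero hnil
  have hsup := hf.superdiag_ne_zero htri hdim
  exact ⟨hf.one_le_finrank_derSubmodule htri, hf.finrank_derSubmodule_le_two htri hsup⟩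

/-- for any `n`-dimensional nilpotent evolution algebra `E` with
`dim E² = n − 1` (equivalently, of maximal nilindex `2^{n−1}+1`), one has
`1 ≤ dim Der(E) ≤ 2`. -/
theorem stmt6 {K E : Type*} [Field K] [CharZero K] [NonUnitalNonAssocRing E]
    [Module K E] [SMulCommClass K E E] [IsScalarTower K E E]
    (n : ℕ) (hn : 1 ≤ n) (e : Module.Basis (Fin n) K E)
    (hzero : ∀ i j : Fin n, i ≠ j → e i * e j = 0)
    (hnil : ∃ m : ℕ, 1 ≤ m ∧ Epow K E m = ⊥)
    (hdim : Module.finrank K ↥(Epow K E 2) = n - 1) :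
    1 ≤ Module.finrank K ↥(DerSubmodule K E) ∧
      Module.finrank K ↥(DerSubmodule K E) ≤ 2 :=
  stmt6_general n hn e hzero hnil hdim
end

section
/- For n ≥ 5 over a field K of characteristic 0, the n-dimensional evolution algebra E₁ with e_1² = e_2 + e_3 + e_4, e_i² = e_{i+1} for 1 < i < n, e_n² = 0, and the n-dimensional evolution algebra E₂ with f_1² = f_2 + f_3, f_i² = f_{i+1} for 1 < i < n, f_n² = 0, are not isomorphic as algebras. -/
/-! Indices start at 0. An algebra isomorphism `ψ : E₁ ≃ E₂` would give `x = ψ e₀` and `y = ψ e₁`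
in `E₂` with `x² = y + y² + (y²)²` and `x y = x y² = y y² = y (y²)² = 0`. Moreover `x₀ ≠ 0`:
every product in `E₂` has vanishing `f₀`-coordinate, the elements `ψ eᵢ` with `i ≥ 1` are
combinations of products, and `ψ` is onto.

In `E₂` the coordinates of a product are `(uv)₀ = 0`, `(uv)₂ = u₁v₁ + u₀v₀` and
`(uv)ₖ₊₁ = uₖvₖ` otherwise. Reading the relations between `x` and `y` coordinate by coordinate
gives successively `y₀ = 0`, `y₁ = x₀²`, `x₁ = 0`, `y₂ = 0`, `x₀² = 1`, `y₃ = 0`, `x₂ = 0`, and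
then the `f₃`-coordinate of `x² = y + y² + (y²)²` reads `0 = 1`. -/

open Module

namespace Module.Basis

section Semiring

variable {R M : Type*} [Semiring R] [AddCommMonoid M] [Module R M] {n : ℕ}

noncomputable def coordNat (b : Basis (Fin n) R M) (k : ℕ) : M →ₗ[R] R :=
  if h : k < n then b.coord ⟨k, h⟩ else 0

theorem coordNat_apply (b : Basis (Fin n) R M) (i : Fin n) (x : M) :
    b.coordNat i x = b.repr x i := by
  simp [coordNat]

theorem coordNat_self (b : Basis (Fin n) R M) (i : Fin n) (k : ℕ) :
    b.coordNat k (b i) = if (i : ℕ) = k then 1 else 0 := by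
  by_cases hk : k < n
  · simp [coordNat, hk, Finsupp.single_apply, Fin.ext_iff]
  · simp [coordNat, hk, show (i : ℕ) ≠ k by omega]

theorem apply_ne_zero_of_forall_ne_eq_zero {ι N : Type*} [AddCommMonoid N] [Module R N]
    (b : Basis ι R M) {χ : M →ₗ[R] N} (hχ : χ ≠ 0) {i₀ : ι} (h : ∀ i ≠ i₀, χ (b i) = 0) :
    χ (b i₀) ≠ 0 := fun h₀ =>
  hχ <| b.ext fun i => by
    by_cases hi : i = i₀
    · rw [hi, h₀, LinearMap.zero_apply]
    · rw [h i hi, LinearMap.zero_apply]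

end Semiring

section EvolutionBasis

variable {R A : Type*} [CommSemiring R] [NonUnitalNonAssocSemiring A] [Module R A]
  [SMulCommClass R A A] [IsScalarTower R A A]

theorem mul_eq_sum_of_pairwise_mul_eq_zero {ι : Type*} [Fintype ι] (b : Basis ι R A)
    (hb : ∀ i j, i ≠ j → b i * b j = 0) (x y : A) :
    x * y = ∑ i, (b.repr x i * b.repr y i) • (b i * b i) := by
  conv_lhs => rw [← b.sum_repr x, ← b.sum_repr y]
  rw [Finset.sum_mul_sum]
  refine Finset.sum_congr rfl fun i _ => ?_
  rw [Finset.sum_eq_single i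
    (fun j _ hji => by rw [smul_mul_smul_comm, hb i j hji.symm, smul_zero]) (by simp),
    smul_mul_smul_comm]

theorem coordNat_mul {n : ℕ} (b : Basis (Fin n) R A) (hb : ∀ i j, i ≠ j → b i * b j = 0)
    (x y : A) (k : ℕ) :
    b.coordNat k (x * y) =
      ∑ j : Fin n, b.coordNat j x * b.coordNat j y * b.coordNat k (b j * b j) := by
  rw [b.mul_eq_sum_of_pairwise_mul_eq_zero hb x y, map_sum]
  exact Finset.sum_congr rfl fun j _ => by
    rw [map_smul, smul_eq_mul, coordNat_apply, coordNat_apply]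

end EvolutionBasis

end Module.Basis

section

variable {K E : Type*} [CommSemiring K] [NonUnitalNonAssocSemiring E] [Module K E] {n : ℕ}

theorem coordNat_basis_mul_self (f : Basis (Fin n) K E) (hn : 3 ≤ n)
    (hf1 : f ⟨0, by omega⟩ * f ⟨0, by omega⟩ = f ⟨1, by omega⟩ + f ⟨2, by omega⟩)
    (hf2 : ∀ i : Fin n, 1 ≤ (i : ℕ) → ∀ hi : (i : ℕ) + 1 < n,
        f i * f i = f ⟨(i : ℕ) + 1, hi⟩)
    (hf3 : f ⟨n - 1, by omega⟩ * f ⟨n - 1, by omega⟩ = 0) (j : Fin n) {k : ℕ} (hk : k < n) :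
    f.coordNat k (f j * f j) =
      (if (j : ℕ) + 1 = k then 1 else 0) + if (j : ℕ) = 0 ∧ k = 2 then 1 else 0 := by
  rcases Nat.eq_zero_or_pos j with hj | hj
  · rw [show j = ⟨0, by omega⟩ from Fin.ext hj, hf1]
    simp [f.coordNat_self, eq_comm]
  by_cases hjn : (j : ℕ) + 1 < n
  · simp [hf2 j hj hjn, f.coordNat_self, hj.ne']
  · rw [show j = ⟨n - 1, by omega⟩ from Fin.ext (by simp only; omega), hf3, map_zero,
      if_neg (by simp only; omega), if_neg (by simp only; omega), add_zero]

variable [SMulCommClass K E E] [IsScalarTower K E E]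

theorem coordNat_zero_mul (f : Basis (Fin n) K E) (hf0 : ∀ i j, i ≠ j → f i * f j = 0)
    (hsq : ∀ (j : Fin n) {k : ℕ}, k < n → f.coordNat k (f j * f j) =
      (if (j : ℕ) + 1 = k then 1 else 0) + if (j : ℕ) = 0 ∧ k = 2 then 1 else 0)
    (x y : E) : f.coordNat 0 (x * y) = 0 := by
  rcases n.eq_zero_or_pos with rfl | hn
  · simp [Basis.coordNat]
  rw [f.coordNat_mul hf0]
  exact Finset.sum_eq_zero fun j _ => by simp [hsq j hn]

theorem coordNat_succ_mul (f : Basis (Fin n) K E) (hf0 : ∀ i j, i ≠ j → f i * f j = 0)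
    (hsq : ∀ (j : Fin n) {k : ℕ}, k < n → f.coordNat k (f j * f j) =
      (if (j : ℕ) + 1 = k then 1 else 0) + if (j : ℕ) = 0 ∧ k = 2 then 1 else 0)
    (x y : E) {k : ℕ} (hk : k + 1 < n) :
    f.coordNat (k + 1) (x * y) = f.coordNat k x * f.coordNat k y +
      if k = 1 then f.coordNat 0 x * f.coordNat 0 y else 0 := by
  rw [f.coordNat_mul hf0]
  simp only [hsq _ hk, mul_add, Finset.sum_add_distrib]
  congr 1
  · rw [Finset.sum_eq_single ⟨k, by omega⟩ (fun j _ hj => by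
      rw [if_neg fun h => hj (Fin.ext (by simp only; omega)), mul_zero]) (by simp)]
    simp
  · rw [Finset.sum_eq_single ⟨0, by omega⟩ (fun j _ hj => by
      rw [if_neg fun h => hj (Fin.ext h.1), mul_zero]) (by simp)]
    by_cases hk1 : k = 1 <;> simp [hk1]

end

theorem coordNat_zero_eq_zero_of_mul_self_eq {K E : Type*} [CommRing K] [IsDomain K]
    [NonUnitalNonAssocRing E] [Module K E] [SMulCommClass K E E] [IsScalarTower K E E] {n : ℕ}
    (f : Basis (Fin n) K E) (hn : 5 ≤ n) (hf0 : ∀ i j, i ≠ j → f i * f j = 0)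
    (hsq : ∀ (j : Fin n) {k : ℕ}, k < n → f.coordNat k (f j * f j) =
      (if (j : ℕ) + 1 = k then 1 else 0) + if (j : ℕ) = 0 ∧ k = 2 then 1 else 0)
    {x y : E} (hxy : x * y = 0) (hxy2 : x * (y * y) = 0) (hyy2 : y * (y * y) = 0)
    (hyy4 : y * (y * y * (y * y)) = 0) (hx : x * x = y + y * y + y * y * (y * y)) :
    f.coordNat 0 x = 0 := by
  set c := f.coordNat
  have c0 (u v : E) : c 0 (u * v) = 0 := coordNat_zero_mul f hf0 hsq u v
  have c1 (u v : E) : c 1 (u * v) = c 0 u * c 0 v := by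
    simpa using coordNat_succ_mul f hf0 hsq u v (k := 0) (by omega)
  have c2 (u v : E) : c 2 (u * v) = c 1 u * c 1 v + c 0 u * c 0 v := by
    simpa using coordNat_succ_mul f hf0 hsq u v (k := 1) (by omega)
  have c3 (u v : E) : c 3 (u * v) = c 2 u * c 2 v := by
    simpa using coordNat_succ_mul f hf0 hsq u v (k := 2) (by omega)
  have c4 (u v : E) : c 4 (u * v) = c 3 u * c 3 v := by
    simpa using coordNat_succ_mul f hf0 hsq u v (k := 3) (by omega)
  by_contra ha0
  have hb0 : c 0 y = 0 := by simpa [c0, eq_comm] using congrArg (c 0) hx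
  have hb1 : c 1 y = c 0 x ^ 2 := by
    have h := congrArg (c 1) hx
    simp only [map_add, c1, c0, hb0] at h
    linear_combination -h
  have ha1 : c 1 x = 0 := by
    have h := congrArg (c 2) hxy
    rw [c2, hb0, hb1, map_zero] at h
    have h' : c 1 x * c 0 x ^ 2 = 0 := by linear_combination h
    simpa [ha0] using h'
  have hc2 : c 2 (y * y) = c 0 x ^ 4 := by rw [c2, hb0, hb1]; ring
  have hb2 : c 2 y = 0 := by
    have h := congrArg (c 3) hyy2
    rw [c3, hc2, map_zero] at h
    simpa [ha0] using h
  have hg2 : c 2 (y * y * (y * y)) = 0 := by rw [c2, c1, c0, hb0]; ring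
  have ha0_sq : c 0 x ^ 2 = 1 := by
    have h := congrArg (c 2) hx
    rw [map_add, map_add, c2, ha1, hb2, hc2, hg2] at h
    have h' : c 0 x ^ 2 * (c 0 x ^ 2 - 1) = 0 := by linear_combination -h
    simpa [ha0, sub_eq_zero] using h'
  have hc3 : c 3 (y * y) = 0 := by rw [c3, hb2, mul_zero]
  have hg3 : c 3 (y * y * (y * y)) = 1 := by
    rw [c3, hc2, ← pow_add, show 4 + 4 = 2 * 4 from rfl, pow_mul, ha0_sq, one_pow]
  have hb3 : c 3 y = 0 := by
    have h := congrArg (c 4) hyy4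
    rwa [c4, hg3, mul_one, map_zero] at h
  have ha2 : c 2 x = 0 := by
    have h := congrArg (c 3) hxy2
    rwa [c3, hc2, show 4 = 2 * 2 from rfl, pow_mul, ha0_sq, one_pow, mul_one, map_zero] at h
  have h := congrArg (c 3) hx
  rw [map_add, map_add, c3, ha2, hb3, hc3, hg3] at h
  norm_num at h

/-- for `n ≥ 5` over a field of characteristic 0, the evolution algebra with
`e_1² = e_2 + e_3 + e_4`, `e_i² = e_{i+1}` (`1 < i < n`), `e_n² = 0` and the evolution
algebra with `f_1² = f_2 + f_3`, `f_i² = f_{i+1}` (`1 < i < n`), `f_n² = 0` are not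
isomorphic as algebras. -/
theorem stmt14 {K E₁ E₂ : Type*} [Field K]
    [NonUnitalNonAssocRing E₁] [Module K E₁] [SMulCommClass K E₁ E₁] [IsScalarTower K E₁ E₁]
    [NonUnitalNonAssocRing E₂] [Module K E₂] [SMulCommClass K E₂ E₂] [IsScalarTower K E₂ E₂]
    (n : ℕ) (hn : 5 ≤ n)
    (e : Module.Basis (Fin n) K E₁) (f : Module.Basis (Fin n) K E₂)
    (he0 : ∀ i j : Fin n, i ≠ j → e i * e j = 0)
    (hf0 : ∀ i j : Fin n, i ≠ j → f i * f j = 0)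
    (he1 : e ⟨0, by omega⟩ * e ⟨0, by omega⟩
        = e ⟨1, by omega⟩ + e ⟨2, by omega⟩ + e ⟨3, by omega⟩)
    (he2 : ∀ i : Fin n, 1 ≤ (i : ℕ) → ∀ hi : (i : ℕ) + 1 < n,
        e i * e i = e ⟨(i : ℕ) + 1, hi⟩)
    (hf1 : f ⟨0, by omega⟩ * f ⟨0, by omega⟩ = f ⟨1, by omega⟩ + f ⟨2, by omega⟩)
    (hf2 : ∀ i : Fin n, 1 ≤ (i : ℕ) → ∀ hi : (i : ℕ) + 1 < n,
        f i * f i = f ⟨(i : ℕ) + 1, hi⟩)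
    (hf3 : f ⟨n - 1, by omega⟩ * f ⟨n - 1, by omega⟩ = 0) :
    ¬ ∃ ψ : E₁ ≃ₗ[K] E₂, ∀ x y : E₁, ψ (x * y) = ψ x * ψ y := by
  rintro ⟨ψ, hψ⟩
  have hsq := coordNat_basis_mul_self f (by omega) hf1 hf2 hf3
  have hψ_sq (i : ℕ) (h₁ : 1 ≤ i) (hi : i + 1 < n) :
      ψ (e ⟨i + 1, hi⟩) = ψ (e ⟨i, by omega⟩) * ψ (e ⟨i, by omega⟩) := by
    rw [← hψ, he2 ⟨i, by omega⟩ h₁ hi]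
  have hψ_orth (i j : ℕ) (hi : i < n) (hj : j < n) (hij : i ≠ j) :
      ψ (e ⟨i, hi⟩) * ψ (e ⟨j, hj⟩) = 0 := by
    rw [← hψ, he0 _ _ (by simpa [Fin.ext_iff] using hij), map_zero]
  set x := ψ (e ⟨0, by omega⟩)
  set y := ψ (e ⟨1, by omega⟩)
  have hy2 : ψ (e ⟨2, by omega⟩) = y * y := hψ_sq 1 le_rfl (by omega)
  have hy4 : ψ (e ⟨3, by omega⟩) = y * y * (y * y) := by rw [hψ_sq 2 (by omega) (by omega), hy2]
  have hx : x * x = y + y * y + y * y * (y * y) := by rw [← hψ, he1, map_add, map_add, hy2, hy4]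
  have hχ : (f.coordNat 0).comp (ψ : E₁ →ₗ[K] E₂) ≠ 0 := fun h => by
    simpa [f.coordNat_self] using LinearMap.congr_fun h (ψ.symm (f ⟨0, by omega⟩))
  refine e.apply_ne_zero_of_forall_ne_eq_zero hχ (i₀ := ⟨0, by omega⟩) (fun i hi => ?_) ?_
  · obtain ⟨_ | j, hj⟩ := i
    · exact absurd rfl hi
    rw [LinearMap.comp_apply, LinearEquiv.coe_coe]
    rcases Nat.eq_zero_or_pos j with rfl | hj₁
    · simpa [coordNat_zero_mul f hf0 hsq] using (congrArg (f.coordNat 0) hx).symm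
    · rw [hψ_sq j hj₁ hj, coordNat_zero_mul f hf0 hsq]
  · exact coordNat_zero_eq_zero_of_mul_self_eq f hn hf0 hsq (hψ_orth 0 1 _ _ (by omega))
      (hy2 ▸ hψ_orth 0 2 _ _ (by omega)) (hy2 ▸ hψ_orth 1 2 _ _ (by omega))
      (hy4 ▸ hψ_orth 1 3 _ _ (by omega)) hx
end

section
/- Let E be the 2-dimensional evolution algebra with e_1² = e_2, e_2² = 0. A linear map ψ on E is a local automorphism if and only if its matrix in the basis {e_1, e_2} is [[α, β],[0, γ²]] for some α, β, γ ∈ K with αγ ≠ 0. -/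
/-!
In coordinates, `(x e₀ + y e₁) * (x' e₀ + y' e₁) = (x x') e₁`. Hence an automorphism sends `e₀` to
some `a e₀ + b e₁` and then `e₁ = e₀²` to `a² e₁`, with `a ≠ 0` by injectivity; conversely every
such triangular map is an automorphism. A local automorphism therefore has this shape on `e₀` and
on `e₁` separately, with possibly different `a`. Conversely, for `ψ = [[α, β], [0, γ²]]` and
`u = x e₀ + y e₁`: if `x = 0` the automorphism with `a = γ` agrees with `ψ` at `u`; if `x ≠ 0` the
one with `a = α` does, once `b` is solved from the `e₁`-coordinate of `ψ u`.
-/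

/-- An automorphism of a (non-associative, non-unital) algebra: a bijective
multiplicative linear map. -/
def IsAut {K E : Type*} [Field K] [NonUnitalNonAssocRing E] [Module K E]
    (φ : E →ₗ[K] E) : Prop :=
  Function.Bijective φ ∧ ∀ x y : E, φ (x * y) = φ x * φ y

/-- A local automorphism: a linear map agreeing at each point with some automorphism. -/
def IsLocalAut {K E : Type*} [Field K] [NonUnitalNonAssocRing E] [Module K E]
    (ψ : E →ₗ[K] E) : Prop :=
  ∀ u : E, ∃ φ : E →ₗ[K] E, IsAut φ ∧ ψ u = φ u

section Linear

variable {K E : Type*} [Field K] [AddCommGroup E] [Module K E] (e : Module.Basis (Fin 2) K E)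

lemma Module.Basis.exists_smul_add_smul_eq (u : E) : ∃ x y : K, x • e 0 + y • e 1 = u :=
  ⟨e.repr u 0, e.repr u 1, by simpa only [Fin.sum_univ_two] using e.sum_repr u⟩

variable {e} {f : E →ₗ[K] E} {a b c : K}

lemma apply_smul_add_smul_of_triangular (h0 : f (e 0) = a • e 0 + b • e 1)
    (h1 : f (e 1) = c • e 1) (x y : K) :
    f (x • e 0 + y • e 1) = (x * a) • e 0 + (x * b + y * c) • e 1 := by
  rw [map_add, map_smul, map_smul, h0, h1]
  match_scalars <;> ring

lemma bijective_of_triangular (h0 : f (e 0) = a • e 0 + b • e 1) (h1 : f (e 1) = c • e 1)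
    (ha : a ≠ 0) (hc : c ≠ 0) : Function.Bijective f := by
  have : Module.Finite K E := Module.Finite.of_basis e
  rw [← Module.End.isUnit_iff, LinearMap.isUnit_iff_isUnit_det, ← LinearMap.det_toMatrix e,
    Matrix.det_fin_two]
  simp [LinearMap.toMatrix_apply, h0, h1, ha, hc]

end Linear

section EvolutionAlgebra

variable {K E : Type*} [Field K] [NonUnitalNonAssocRing E] [Module K E] [SMulCommClass K E E]
  [IsScalarTower K E E] {e : Module.Basis (Fin 2) K E}
  (hzero : ∀ i j : Fin 2, i ≠ j → e i * e j = 0) (h1 : e 0 * e 0 = e 1) (h2 : e 1 * e 1 = 0)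

include hzero h1 h2

lemma smul_add_smul_mul_smul_add_smul (p q r s : K) :
    (p • e 0 + q • e 1) * (r • e 0 + s • e 1) = (p * r) • e 1 := by
  simp only [add_mul, mul_add, smul_mul_assoc, mul_smul_comm, h1, h2, hzero 0 1 (by decide),
    hzero 1 0 (by decide), smul_zero, add_zero, smul_smul, mul_comm r p]

lemma isAut_iff {φ : E →ₗ[K] E} :
    IsAut φ ↔ ∃ a b : K, a ≠ 0 ∧ φ (e 0) = a • e 0 + b • e 1 ∧ φ (e 1) = (a ^ 2) • e 1 := by
  constructor
  · rintro ⟨hbij, hmul⟩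
    obtain ⟨a, b, hφ0⟩ := e.exists_smul_add_smul_eq (φ (e 0))
    have hφ1 : φ (e 1) = (a ^ 2) • e 1 := by
      rw [sq, ← smul_add_smul_mul_smul_add_smul hzero h1 h2, hφ0, ← hmul, h1]
    refine ⟨a, b, fun ha => e.ne_zero 1 (hbij.1 ?_), hφ0.symm, hφ1⟩
    rw [hφ1, ha, map_zero]
    simp
  · rintro ⟨a, b, ha, hφ0, hφ1⟩
    refine ⟨bijective_of_triangular hφ0 hφ1 ha (pow_ne_zero 2 ha), fun u v => ?_⟩
    obtain ⟨x, y, rfl⟩ := e.exists_smul_add_smul_eq u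
    obtain ⟨z, w, rfl⟩ := e.exists_smul_add_smul_eq v
    simp only [apply_smul_add_smul_of_triangular hφ0 hφ1,
      smul_add_smul_mul_smul_add_smul hzero h1 h2, map_smul, hφ1, smul_smul]
    ring_nf

lemma exists_isAut_of_ne_zero {a : K} (b : K) (ha : a ≠ 0) :
    ∃ φ : E →ₗ[K] E, IsAut φ ∧ φ (e 0) = a • e 0 + b • e 1 ∧ φ (e 1) = (a ^ 2) • e 1 := by
  let φ := e.constr K ![a • e 0 + b • e 1, (a ^ 2) • e 1]
  have hφ0 : φ (e 0) = a • e 0 + b • e 1 := by simp [φ]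
  have hφ1 : φ (e 1) = (a ^ 2) • e 1 := by simp [φ]
  exact ⟨φ, (isAut_iff hzero h1 h2).2 ⟨a, b, ha, hφ0, hφ1⟩, hφ0, hφ1⟩

lemma isLocalAut_of_triangular {ψ : E →ₗ[K] E} {α β γ : K} (hα : α ≠ 0) (hγ : γ ≠ 0)
    (hψ0 : ψ (e 0) = α • e 0 + β • e 1) (hψ1 : ψ (e 1) = (γ ^ 2) • e 1) : IsLocalAut ψ := by
  intro u
  obtain ⟨x, y, rfl⟩ := e.exists_smul_add_smul_eq u
  rw [apply_smul_add_smul_of_triangular hψ0 hψ1]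
  by_cases hx : x = 0
  · obtain ⟨φ, hφ, hφ0, hφ1⟩ := exists_isAut_of_ne_zero hzero h1 h2 0 hγ
    refine ⟨φ, hφ, ?_⟩
    rw [apply_smul_add_smul_of_triangular hφ0 hφ1, hx]
    simp
  · obtain ⟨φ, hφ, hφ0, hφ1⟩ :=
      exists_isAut_of_ne_zero hzero h1 h2 ((x * β + y * γ ^ 2 - y * α ^ 2) / x) hα
    refine ⟨φ, hφ, ?_⟩
    rw [apply_smul_add_smul_of_triangular hφ0 hφ1]
    congr 2
    field_simp
    ring

end EvolutionAlgebra

theorem stmt15_general {K E : Type*} [Field K] [NonUnitalNonAssocRing E]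
    [Module K E] [SMulCommClass K E E] [IsScalarTower K E E]
    (e : Module.Basis (Fin 2) K E)
    (hzero : ∀ i j : Fin 2, i ≠ j → e i * e j = 0)
    (h1 : e 0 * e 0 = e 1) (h2 : e 1 * e 1 = 0)
    (ψ : E →ₗ[K] E) :
    IsLocalAut ψ ↔ ∃ α β γ : K, α * γ ≠ 0 ∧
      ψ (e 0) = α • e 0 + β • e 1 ∧ ψ (e 1) = (γ ^ 2) • e 1 := by
  constructor
  · intro hψ
    obtain ⟨φ, hφ, hψ0⟩ := hψ (e 0)
    obtain ⟨φ', hφ', hψ1⟩ := hψ (e 1)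
    obtain ⟨α, β, hα, hφ0, -⟩ := (isAut_iff hzero h1 h2).1 hφ
    obtain ⟨γ, -, hγ, -, hφ'1⟩ := (isAut_iff hzero h1 h2).1 hφ'
    exact ⟨α, β, γ, mul_ne_zero hα hγ, hψ0.trans hφ0, hψ1.trans hφ'1⟩
  · rintro ⟨α, β, γ, hαγ, hψ0, hψ1⟩
    exact isLocalAut_of_triangular hzero h1 h2 (left_ne_zero_of_mul hαγ)
      (right_ne_zero_of_mul hαγ) hψ0 hψ1

/-- for the 2-dimensional evolution algebra with `e_1² = e_2`, `e_2² = 0`,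
a linear map `ψ` is a local automorphism iff its matrix is `[[α, β],[0, γ²]]` with
`αγ ≠ 0`. -/
theorem stmt15 {K E : Type*} [Field K] [CharZero K] [NonUnitalNonAssocRing E]
    [Module K E] [SMulCommClass K E E] [IsScalarTower K E E]
    (e : Module.Basis (Fin 2) K E)
    (hzero : ∀ i j : Fin 2, i ≠ j → e i * e j = 0)
    (h1 : e 0 * e 0 = e 1) (h2 : e 1 * e 1 = 0)
    (ψ : E →ₗ[K] E) :
    IsLocalAut ψ ↔ ∃ α β γ : K, α * γ ≠ 0 ∧
      ψ (e 0) = α • e 0 + β • e 1 ∧ ψ (e 1) = (γ ^ 2) • e 1 :=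
  stmt15_general e hzero h1 h2 ψ
end

section
/- Let E be an n-dimensional nilpotent evolution algebra with maximal nilindex 2^{n−1}+1, where n > 2. Then every local automorphism of E is an automorphism. -/
/-!
Index the basis by `0, …, m`. An automorphism `φ` has the shape
`φ (e i) = α i • e i + β i • e m` with `α (i + 1) = α i ^ 2`, and comparing the last coordinates
of `φ (e i) ^ 2 = ∑ j > i, a i j • φ (e j)` determines `β k` for `k ≥ 1` from the `α`s; so for
`1 ≤ j ≤ k`, `φ (e k)` depends only on `α j`. Let `φ` be the automorphism that agrees with the
local automorphism `ψ` at `∑ i, e i`. Since the automorphism at `e i` sends `e i` to a vector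
whose coordinates below `m` are only the diagonal one, comparing coordinates in
`ψ (∑ i, e i) = φ (∑ i, e i)` shows that it has the same `α i` as `φ` for `i < m`, hence
`ψ (e i) = φ (e i)` for `0 < i < m`; the same argument with `e 1 + e m` gives `i = m`, and
`i = 0` then follows from `ψ (∑ i, e i) = φ (∑ i, e i)`.
-/

open Finset

theorem Module.Basis.mul_eq_sum_smul_mul_self_s16 {ι K E : Type*} [Fintype ι] [CommSemiring K]
    [NonUnitalNonAssocSemiring E] [Module K E] [SMulCommClass K E E] [IsScalarTower K E E]
    (e : Module.Basis ι K E) (he : ∀ i j, i ≠ j → e i * e j = 0) (u v : E) :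
    u * v = ∑ i, (e.repr u i * e.repr v i) • (e i * e i) := by
  conv_lhs => rw [← e.sum_repr u, ← e.sum_repr v]
  rw [sum_mul_sum]
  refine sum_congr rfl fun i _ => ?_
  rw [sum_eq_single i (fun j _ hj => by rw [smul_mul_smul_comm, he i j hj.symm, smul_zero])
    (by simp), smul_mul_smul_comm]

/-- A natural basis with upper triangular structure constants; the nonvanishing of the
superdiagonal `a i (i + 1)` is equivalent to the maximal nilindex `2 ^ m + 1`. -/
structure IsMaxNilindexBasis {K E : Type*} [Field K] [NonUnitalNonAssocRing E] [Module K E]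
    {m : ℕ} (a : Fin (m + 1) → Fin (m + 1) → K) (e : Module.Basis (Fin (m + 1)) K E) : Prop where
  mul_of_ne : ∀ i j, i ≠ j → e i * e j = 0
  mul_self : ∀ i, e i * e i = ∑ j ∈ Ioi i, a i j • e j
  superdiag_ne : ∀ i : Fin m, a i.castSucc i.succ ≠ 0

theorem eq_zero_of_forall_sum_Iio_mul_eq_zero {K : Type*} [Field K] {m : ℕ}
    {a : Fin (m + 1) → Fin (m + 1) → K} (ha : ∀ i : Fin m, a i.castSucc i.succ ≠ 0)
    {g : Fin (m + 1) → K} {i : Fin (m + 1)} (hg : ∀ j ≤ i, ∑ k ∈ Iio j, g k * a k j = 0)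
    {k : Fin (m + 1)} (hk : k < i) : g k = 0 := by
  induction k using WellFoundedLT.induction with
  | _ k ih =>
  obtain ⟨k, rfl⟩ := Fin.exists_castSucc_eq.mpr (hk.trans_le (Fin.le_last i)).ne
  have hsum := hg k.succ (Fin.castSucc_lt_iff_succ_le.mp hk)
  rw [sum_eq_single_of_mem k.castSucc (mem_Iio.mpr Fin.castSucc_lt_succ) fun l hl hlk => by
    have hlt := lt_of_le_of_ne (Fin.le_castSucc_iff.mpr (mem_Iio.mp hl)) hlk
    rw [ih l hlt (hlt.trans hk), zero_mul]] at hsum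
  exact (mul_eq_zero.mp hsum).resolve_right (ha k)

namespace IsMaxNilindexBasis

variable {K E : Type*} [Field K] [NonUnitalNonAssocRing E] [Module K E] {m : ℕ}
  {a : Fin (m + 1) → Fin (m + 1) → K} {e : Module.Basis (Fin (m + 1)) K E}

theorem repr_map_mul_self (h : IsMaxNilindexBasis a e) (φ : E →ₗ[K] E) (i j : Fin (m + 1)) :
    e.repr (φ (e i * e i)) j = ∑ l ∈ Ioi i, a i l * e.repr (φ (e l)) j := by
  simp [h.mul_self]

variable [SMulCommClass K E E] [IsScalarTower K E E]

theorem repr_mul (h : IsMaxNilindexBasis a e) (u v : E) (j : Fin (m + 1)) :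
    e.repr (u * v) j = ∑ k ∈ Iio j, e.repr u k * e.repr v k * a k j := by
  rw [e.mul_eq_sum_smul_mul_self_s16 h.mul_of_ne u v]
  simp [h.mul_self, Finsupp.single_apply, ← sum_filter, filter_gt_eq_Iio]

theorem mul_self_castSucc_ne_zero (h : IsMaxNilindexBasis a e) (i : Fin m) :
    e i.castSucc * e i.castSucc ≠ 0 := fun h0 => h.superdiag_ne i <| by
  simpa [h0, Finsupp.single_apply, Fin.castSucc_lt_succ] using
    (h.repr_mul (e i.castSucc) (e i.castSucc) i.succ).symm

theorem mul_eq_zero_of_repr_eq_zero (h : IsMaxNilindexBasis a e) {u : E}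
    (hu : ∀ k < Fin.last m, e.repr u k = 0) (v : E) : u * v = 0 :=
  e.ext_elem fun j => by
    rw [h.repr_mul, map_zero, Finsupp.zero_apply]
    exact sum_eq_zero fun k hk => by
      rw [hu k ((mem_Iio.mp hk).trans_le (Fin.le_last j)), zero_mul, zero_mul]

variable {φ : E →ₗ[K] E}

theorem repr_mul_repr_eq_zero (h : IsMaxNilindexBasis a e) (hφ : IsAut φ) {i j : Fin (m + 1)}
    (hij : i ≠ j) {k : Fin (m + 1)} (hk : k < Fin.last m) :
    e.repr (φ (e i)) k * e.repr (φ (e j)) k = 0 :=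
  eq_zero_of_forall_sum_Iio_mul_eq_zero h.superdiag_ne
    (g := fun k => e.repr (φ (e i)) k * e.repr (φ (e j)) k)
    (fun l _ => by simp [← h.repr_mul, ← hφ.2, h.mul_of_ne i j hij]) hk

/-- Downward induction on `i`: coordinates of `φ (e i)` below `i` vanish because those of
`φ (e i) ^ 2 = ∑ l > i, a i l • φ (e l)` do, those above by orthogonality to `φ (e l)`. -/
theorem repr_aut_eq_zero_and_repr_self_ne_zero (h : IsMaxNilindexBasis a e) (hφ : IsAut φ)
    (i : Fin (m + 1)) :
    (∀ k ≠ i, k < Fin.last m → e.repr (φ (e i)) k = 0) ∧ e.repr (φ (e i)) i ≠ 0 := by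
  induction i using WellFoundedGT.induction with
  | _ i ih =>
  have below : ∀ k < i, e.repr (φ (e i)) k = 0 := fun k hk => mul_self_eq_zero.mp <|
    eq_zero_of_forall_sum_Iio_mul_eq_zero h.superdiag_ne
      (g := fun k => e.repr (φ (e i)) k * e.repr (φ (e i)) k) (fun j hj => by
        rw [← h.repr_mul, ← hφ.2, h.repr_map_mul_self]
        refine sum_eq_zero fun l hl => ?_
        have hjl := hj.trans_lt (mem_Ioi.mp hl)
        rw [(ih l (mem_Ioi.mp hl)).1 j hjl.ne (hjl.trans_le (Fin.le_last l)), mul_zero]) hk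
  have above : ∀ k, i < k → k < Fin.last m → e.repr (φ (e i)) k = 0 := fun k hik hk =>
    (mul_eq_zero.mp (h.repr_mul_repr_eq_zero hφ hik.ne hk)).resolve_right (ih k hik).2
  have off : ∀ k ≠ i, k < Fin.last m → e.repr (φ (e i)) k = 0 := fun k hki hk =>
    hki.lt_or_gt.elim (below k) (fun hik => above k hik hk)
  refine ⟨off, fun hii => ?_⟩
  have hu : ∀ k < Fin.last m, e.repr (φ (e i)) k = 0 := fun k hk =>
    if hki : k = i then hki ▸ hii else off k hki hk
  have hsq : e i * e i = 0 :=
    hφ.1.1 (by rw [map_zero, hφ.2, h.mul_eq_zero_of_repr_eq_zero hu])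
  rcases Fin.eq_castSucc_or_eq_last i with ⟨i, rfl⟩ | rfl
  · exact h.mul_self_castSucc_ne_zero i hsq
  · refine e.ne_zero (Fin.last m) (hφ.1.1 (e.ext_elem fun k => ?_))
    rcases (Fin.le_last k).lt_or_eq with hk | rfl
    · simp [hu k hk]
    · simp [hii]

theorem repr_aut_eq_zero (h : IsMaxNilindexBasis a e) (hφ : IsAut φ) {i k : Fin (m + 1)}
    (hki : k ≠ i) (hk : k < Fin.last m) : e.repr (φ (e i)) k = 0 :=
  (h.repr_aut_eq_zero_and_repr_self_ne_zero hφ i).1 k hki hk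

variable {φ₁ φ₂ : E →ₗ[K] E}

theorem repr_self_mul_self_mul (h : IsMaxNilindexBasis a e) (hφ : IsAut φ) {i j : Fin (m + 1)}
    (hij : i < j) :
    e.repr (φ (e i)) i * e.repr (φ (e i)) i * a i j
      = ∑ l ∈ Ioi i, a i l * e.repr (φ (e l)) j := by
  rw [← h.repr_map_mul_self, hφ.2, h.repr_mul,
    sum_eq_single_of_mem i (mem_Iio.mpr hij) fun k hk hki => by
      rw [h.repr_aut_eq_zero hφ hki ((mem_Iio.mp hk).trans_le (Fin.le_last j)), zero_mul,
        zero_mul]]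

theorem repr_succ_self (h : IsMaxNilindexBasis a e) (hφ : IsAut φ) (i : Fin m) :
    e.repr (φ (e i.succ)) i.succ
      = e.repr (φ (e i.castSucc)) i.castSucc * e.repr (φ (e i.castSucc)) i.castSucc := by
  have hrel := h.repr_self_mul_self_mul hφ (Fin.castSucc_lt_succ (i := i))
  rw [sum_eq_single_of_mem i.succ (mem_Ioi.mpr Fin.castSucc_lt_succ) fun l hl hli => by
    have hil := lt_of_le_of_ne (Fin.castSucc_lt_iff_succ_le.mp (mem_Ioi.mp hl)) (Ne.symm hli)
    rw [h.repr_aut_eq_zero hφ (Ne.symm hli) (hil.trans_le (Fin.le_last l)), mul_zero]] at hrel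
  exact mul_left_cancel₀ (h.superdiag_ne i) (by rw [← hrel, mul_comm])

theorem repr_self_eq_of_le (h : IsMaxNilindexBasis a e) (hφ₁ : IsAut φ₁) (hφ₂ : IsAut φ₂)
    {j : Fin (m + 1)} (hj : e.repr (φ₁ (e j)) j = e.repr (φ₂ (e j)) j) {k : Fin (m + 1)}
    (hjk : j ≤ k) : e.repr (φ₁ (e k)) k = e.repr (φ₂ (e k)) k := by
  induction k using WellFoundedLT.induction with
  | _ k ih =>
  rcases hjk.lt_or_eq with hjk | rfl
  · obtain ⟨k, rfl⟩ :=
      Fin.exists_succ_eq.mpr (Fin.pos_iff_ne_zero.mp ((Fin.zero_le j).trans_lt hjk))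
    rw [h.repr_succ_self hφ₁, h.repr_succ_self hφ₂,
      ih k.castSucc Fin.castSucc_lt_succ (Fin.le_castSucc_iff.mpr hjk)]
  · exact hj

/-- The last coordinates are recovered top-down from the relation of `repr_self_mul_self_mul`
at `j = last`, whose left side is `repr (φ (e k)) k · a (k - 1) last` by `repr_succ_self`. -/
theorem repr_last_eq_of_le (h : IsMaxNilindexBasis a e) (hφ₁ : IsAut φ₁) (hφ₂ : IsAut φ₂)
    {j : Fin (m + 1)} (hj : e.repr (φ₁ (e j)) j = e.repr (φ₂ (e j)) j) {k : Fin (m + 1)}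
    (hk : 0 < k) (hjk : j ≤ k) :
    e.repr (φ₁ (e k)) (Fin.last m) = e.repr (φ₂ (e k)) (Fin.last m) := by
  induction k using WellFoundedGT.induction with
  | _ k ih =>
  obtain ⟨k, rfl⟩ := Fin.exists_succ_eq.mpr (Fin.pos_iff_ne_zero.mp hk)
  have hrel (φ : E →ₗ[K] E) (hφ : IsAut φ) :
      e.repr (φ (e k.succ)) k.succ * a k.castSucc (Fin.last m)
        = a k.castSucc k.succ * e.repr (φ (e k.succ)) (Fin.last m)
          + ∑ l ∈ (Ioi k.castSucc).erase k.succ,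
              a k.castSucc l * e.repr (φ (e l)) (Fin.last m) := by
    rw [h.repr_succ_self hφ, h.repr_self_mul_self_mul hφ (Fin.castSucc_lt_last k)]
    exact (add_sum_erase _ _ (mem_Ioi.mpr Fin.castSucc_lt_succ)).symm
  have htail :
      ∑ l ∈ (Ioi k.castSucc).erase k.succ, a k.castSucc l * e.repr (φ₁ (e l)) (Fin.last m)
        = ∑ l ∈ (Ioi k.castSucc).erase k.succ, a k.castSucc l * e.repr (φ₂ (e l)) (Fin.last m) := by
    refine sum_congr rfl fun l hl => ?_
    have hkl : k.succ < l := lt_of_le_of_ne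
      (Fin.castSucc_lt_iff_succ_le.mp (mem_Ioi.mp (mem_of_mem_erase hl))) (ne_of_mem_erase hl).symm
    rw [ih l hkl (hk.trans hkl) (hjk.trans hkl.le)]
  have hsum := hrel φ₁ hφ₁
  rw [h.repr_self_eq_of_le hφ₁ hφ₂ hj hjk, hrel φ₂ hφ₂, htail] at hsum
  exact mul_left_cancel₀ (h.superdiag_ne k) (add_right_cancel hsum).symm

theorem apply_eq_of_repr_self_eq (h : IsMaxNilindexBasis a e) (hφ₁ : IsAut φ₁)
    (hφ₂ : IsAut φ₂) {j : Fin (m + 1)} (hj0 : 0 < j)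
    (hj : e.repr (φ₁ (e j)) j = e.repr (φ₂ (e j)) j) {k : Fin (m + 1)} (hjk : j ≤ k) :
    φ₁ (e k) = φ₂ (e k) :=
  e.ext_elem fun l => by
    by_cases hlk : l = k
    · subst hlk
      exact h.repr_self_eq_of_le hφ₁ hφ₂ hj hjk
    rcases (Fin.le_last l).lt_or_eq with hl | rfl
    · rw [h.repr_aut_eq_zero hφ₁ hlk hl, h.repr_aut_eq_zero hφ₂ hlk hl]
    · exact h.repr_last_eq_of_le hφ₁ hφ₂ hj (hj0.trans_le hjk) hjk

theorem repr_self_eq_of_sum_eq (h : IsMaxNilindexBasis a e) {s : Finset (Fin (m + 1))}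
    {Φ : Fin (m + 1) → E →ₗ[K] E} (hΦ : ∀ i, IsAut (Φ i)) (hφ : IsAut φ)
    (hsum : ∑ i ∈ s, Φ i (e i) = ∑ i ∈ s, φ (e i)) {k : Fin (m + 1)} (hks : k ∈ s)
    (hk : k < Fin.last m) : e.repr (Φ k (e k)) k = e.repr (φ (e k)) k := by
  have hk_coord := congrArg (fun x => e.repr x k) hsum
  simp only [map_sum, Finsupp.coe_finsetSum, Finset.sum_apply] at hk_coord
  rwa [sum_eq_single_of_mem k hks fun i _ hik => h.repr_aut_eq_zero (hΦ i) (Ne.symm hik) hk,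
    sum_eq_single_of_mem k hks fun i _ hik => h.repr_aut_eq_zero hφ (Ne.symm hik) hk] at hk_coord

variable {ψ : E →ₗ[K] E} {Φ : E → E →ₗ[K] E}

/-- For `i = last` the test vector is `e 1 + e last`: it carries the diagonal entry at `1`,
which determines `Φ u (e last)`, from `Φ (e 1)` over to `Φ (e 1 + e last)`. -/
theorem apply_eq_of_isLocalAut (h : IsMaxNilindexBasis a e) (hm : 2 ≤ m)
    (hΦ : ∀ u, IsAut (Φ u)) (hψΦ : ∀ u, ψ u = Φ u u) {i : Fin (m + 1)} (hi0 : 0 < i) :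
    ψ (e i) = Φ (∑ j, e j) (e i) := by
  have hsum (s : Finset (Fin (m + 1))) :
      ∑ i ∈ s, Φ (e i) (e i) = ∑ i ∈ s, Φ (∑ j ∈ s, e j) (e i) := by
    rw [← map_sum, ← hψΦ, map_sum]
    exact sum_congr rfl fun i _ => (hψΦ (e i)).symm
  have hdiag {s : Finset (Fin (m + 1))} {k : Fin (m + 1)} (hks : k ∈ s) (hk : k < Fin.last m) :=
    h.repr_self_eq_of_sum_eq (fun i => hΦ (e i)) (hΦ _) (hsum s) hks hk
  rcases (Fin.le_last i).lt_or_eq with hi | rfl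
  · exact (hψΦ _).trans
      (h.apply_eq_of_repr_self_eq (hΦ _) (hΦ _) hi0 (hdiag (mem_univ i) hi) le_rfl)
  set j : Fin (m + 1) := ⟨1, by omega⟩
  have hj0 : 0 < j := Fin.lt_def.mpr Nat.one_pos
  have hj : j < Fin.last m := Fin.lt_def.mpr (by simp [j]; omega)
  have hjs : j ∈ ({j, Fin.last m} : Finset _) := mem_insert_self _ _
  have hpair := hsum {j, Fin.last m}
  rw [sum_pair hj.ne, sum_pair hj.ne,
    h.apply_eq_of_repr_self_eq (hΦ _) (hΦ _) hj0 (hdiag hjs hj) le_rfl,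
    add_left_cancel_iff] at hpair
  rw [hψΦ, hpair]
  exact h.apply_eq_of_repr_self_eq (hΦ _) (hΦ _) hj0
    ((hdiag hjs hj).symm.trans (hdiag (mem_univ j) hj)) (Fin.le_last j)

end IsMaxNilindexBasis

theorem stmt16_general {K E : Type*} [Field K] [NonUnitalNonAssocRing E]
    [Module K E] [SMulCommClass K E E] [IsScalarTower K E E]
    (n : ℕ) (hn : 2 < n) (a : Fin n → Fin n → K) (e : Module.Basis (Fin n) K E)
    (hzero : ∀ i j : Fin n, i ≠ j → e i * e j = 0)
    (hsq : ∀ i : Fin n, e i * e i = ∑ j ∈ Finset.univ.filter (fun j => i < j), a i j • e j)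
    (hne : ∀ i : Fin n, ∀ hi : (i : ℕ) + 1 < n, a i ⟨(i : ℕ) + 1, hi⟩ ≠ 0)
    (ψ : E →ₗ[K] E) (hψ : IsLocalAut ψ) :
    IsAut ψ := by
  obtain ⟨m, rfl⟩ : ∃ m, n = m + 1 := ⟨n - 1, by omega⟩
  have h : IsMaxNilindexBasis a e :=
    ⟨hzero, fun i => by rw [hsq, filter_lt_eq_Ioi], fun i => hne i.castSucc i.succ.isLt⟩
  choose Φ hΦ hψΦ using hψ
  have hpos (i : Fin (m + 1)) (hi : i ≠ 0) : ψ (e i) = Φ (∑ j, e j) (e i) :=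
    h.apply_eq_of_isLocalAut (by omega) hΦ hψΦ (Fin.pos_iff_ne_zero.mpr hi)
  have hψ0 : ψ (e 0) = Φ (∑ j, e j) (e 0) := by
    have hsum := hψΦ (∑ j, e j)
    rw [map_sum, map_sum, ← add_sum_erase _ _ (mem_univ 0), ← add_sum_erase _ _ (mem_univ 0),
      sum_congr rfl fun i hi => hpos i (ne_of_mem_erase hi)] at hsum
    exact add_right_cancel hsum
  have hψφ : ψ = Φ (∑ j, e j) := e.ext fun i => if hi : i = 0 then hi ▸ hψ0 else hpos i hi
  exact hψφ ▸ hΦ _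

/-- for an `n`-dimensional nilpotent evolution algebra of maximal
nilindex `2^{n−1}+1` with `n > 2`, every local automorphism is an automorphism. -/
theorem stmt16 {K E : Type*} [Field K] [CharZero K] [NonUnitalNonAssocRing E]
    [Module K E] [SMulCommClass K E E] [IsScalarTower K E E]
    (n : ℕ) (hn : 2 < n) (a : Fin n → Fin n → K) (e : Module.Basis (Fin n) K E)
    (hzero : ∀ i j : Fin n, i ≠ j → e i * e j = 0)
    (hsq : ∀ i : Fin n, e i * e i = ∑ j ∈ Finset.univ.filter (fun j => i < j), a i j • e j)
    (hne : ∀ i : Fin n, ∀ hi : (i : ℕ) + 1 < n, a i ⟨(i : ℕ) + 1, hi⟩ ≠ 0)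
    (ψ : E →ₗ[K] E) (hψ : IsLocalAut ψ) :
    IsAut ψ :=
  stmt16_general n hn a e hzero hsq hne ψ hψ
end
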